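/- arXiv:q-alg/9709014 — 5 statements merged into one kernel-verified Lean document; each statement's English description precedes it below -/
import Mathlib

section
/- Let τ ∈ ℂ with Im τ > 0 and set Γ = ℤ + τℤ. There exists a unique entire function θ : ℂ → ℂ such that: θ′(0) = 1; the zero set of θ is exactly Γ; θ(z+1) = −θ(z) for all z ∈ ℂ; and θ(z+τ) = −e^{−iπτ} e^{−2iπz} θ(z) for all z ∈ ℂ. -/
set_option maxHeartbeats 1000000


open Complex

/-- The lattice `Γ = ℤ + τℤ` associated to `τ`. -/
def lattice (τ : ℂ) : Set ℂ := {z : ℂ | ∃ m n : ℤ, z = (m : ℂ) + (n : ℂ) * τ}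

open Finset Filter Topology

namespace ThetaAux


variable {f : ℕ → ℂ}

lemma norm_prod_le_exp (f : ℕ → ℂ) (s : Finset ℕ) :
    ‖∏ i ∈ s, (1 + f i) - 1‖ ≤ Real.exp (∑ i ∈ s, ‖f i‖) - 1 := by
  classical
  induction s using Finset.induction with
  | empty => simp
  | insert a s hns ih =>
    rw [Finset.prod_insert hns, Finset.sum_insert hns]
    have key : (1 + f a) * ∏ i ∈ s, (1 + f i) - 1
        = (1 + f a) * (∏ i ∈ s, (1 + f i) - 1) + f a := by ring
    rw [key]
    have e1 : ‖(1 : ℂ) + f a‖ ≤ Real.exp ‖f a‖ := by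
      refine (norm_add_le _ _).trans ?_
      have := Real.add_one_le_exp ‖f a‖
      simp only [norm_one]
      linarith
    have e2 : ‖f a‖ ≤ Real.exp ‖f a‖ - 1 := by
      have := Real.add_one_le_exp ‖f a‖; linarith
    calc ‖(1 + f a) * (∏ i ∈ s, (1 + f i) - 1) + f a‖
        ≤ ‖1 + f a‖ * ‖∏ i ∈ s, (1 + f i) - 1‖ + ‖f a‖ := by
          refine (norm_add_le _ _).trans ?_
          rw [norm_mul]
      _ ≤ Real.exp ‖f a‖ * (Real.exp (∑ i ∈ s, ‖f i‖) - 1) + (Real.exp ‖f a‖ - 1) := by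
          refine add_le_add (mul_le_mul e1 ih (norm_nonneg _) (Real.exp_nonneg _)) e2
      _ = Real.exp (‖f a‖ + ∑ i ∈ s, ‖f i‖) - 1 := by rw [Real.exp_add]; ring

lemma norm_prod_le_exp' (f : ℕ → ℂ) (s : Finset ℕ) :
    ‖∏ i ∈ s, (1 + f i)‖ ≤ Real.exp (∑ i ∈ s, ‖f i‖) := by
  have h := norm_prod_le_exp f s
  have h2 := norm_sub_norm_le (∏ i ∈ s, (1 + f i)) 1
  simp only [norm_one] at h2
  linarith

lemma norm_prod_sub_prod_le (f : ℕ → ℂ) {s t : Finset ℕ} (hst : s ⊆ t) :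
    ‖∏ i ∈ t, (1 + f i) - ∏ i ∈ s, (1 + f i)‖
      ≤ Real.exp (∑ i ∈ s, ‖f i‖) * (Real.exp (∑ i ∈ t \ s, ‖f i‖) - 1) := by
  classical
  have hsplit : ∏ i ∈ t, (1 + f i) = (∏ i ∈ t \ s, (1 + f i)) * ∏ i ∈ s, (1 + f i) :=
    (Finset.prod_sdiff hst).symm
  have : ∏ i ∈ t, (1 + f i) - ∏ i ∈ s, (1 + f i)
      = (∏ i ∈ s, (1 + f i)) * ((∏ i ∈ t \ s, (1 + f i)) - 1) := by
    rw [hsplit]; ring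
  rw [this, norm_mul]
  exact mul_le_mul (norm_prod_le_exp' f s) (norm_prod_le_exp f _) (norm_nonneg _)
    (Real.exp_nonneg _)

lemma multipliable_one_add (hf : Summable fun n => ‖f n‖) :
    Multipliable (fun n => 1 + f n) := by
  classical
  set T := ∑' n, ‖f n‖ with hT
  have hTs : ∀ s : Finset ℕ, ∑ i ∈ s, ‖f i‖ ≤ T := fun s => Summable.sum_le_tsum s (fun i _ => norm_nonneg _) hf
  have hcauchy : CauchySeq (fun s : Finset ℕ => ∏ i ∈ s, (1 + f i)) := by
    rw [Metric.cauchySeq_iff]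
    intro ε hε
    -- choose δ with exp T * (exp δ - 1) < ε/2
    have hcont : Tendsto (fun x : ℝ => Real.exp T * (Real.exp x - 1)) (𝓝 0) (𝓝 0) := by
      have : Tendsto (fun x : ℝ => Real.exp x - 1) (𝓝 0) (𝓝 0) := by
        simpa using (Real.continuous_exp.tendsto 0).sub (tendsto_const_nhds (x := (1:ℝ)))
      simpa using this.const_mul (Real.exp T)
    obtain ⟨δ, hδpos, hδ⟩ : ∃ δ > 0, Real.exp T * (Real.exp δ - 1) < ε/2 := by
      have := (hcont.eventually (eventually_lt_nhds (show (0:ℝ) < ε/2 by linarith))).self_of_nhds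
      have h2 := hcont.eventually (eventually_lt_nhds (show (0:ℝ) < ε/2 by linarith))
      rcases Metric.eventually_nhds_iff.1 h2 with ⟨δ, hδ, hball⟩
      exact ⟨δ/2, by linarith, hball (by rw [Real.dist_eq, sub_zero, abs_of_pos (by linarith)]; linarith)⟩
    obtain ⟨s₀, hs₀⟩ := summable_iff_vanishing.1 hf (Metric.ball 0 δ) (Metric.ball_mem_nhds _ hδpos)
    refine ⟨s₀, fun t ht u hu => ?_⟩
    have key : ∀ v : Finset ℕ, s₀ ⊆ v →
        ‖∏ i ∈ v, (1 + f i) - ∏ i ∈ s₀, (1 + f i)‖ < ε/2 := by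
      intro v hv
      refine lt_of_le_of_lt (norm_prod_sub_prod_le f hv) ?_
      refine lt_of_le_of_lt ?_ hδ
      have hdisj : Disjoint (v \ s₀) s₀ := Finset.sdiff_disjoint
      have := hs₀ _ hdisj
      simp only [Metric.mem_ball, dist_zero_right, Real.norm_eq_abs] at this
      have habs : ∑ i ∈ v \ s₀, ‖f i‖ < δ := lt_of_abs_lt this
      have : Real.exp (∑ i ∈ v \ s₀, ‖f i‖) - 1 ≤ Real.exp δ - 1 := by
        have := Real.exp_le_exp.2 habs.le; linarith
      refine mul_le_mul (Real.exp_le_exp.2 (hTs s₀)) this ?_ (Real.exp_nonneg _)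
      have := Real.exp_le_exp.2 (le_refl (∑ i ∈ v \ s₀, ‖f i‖))
      have h0 : (1:ℝ) ≤ Real.exp (∑ i ∈ v \ s₀, ‖f i‖) :=
        Real.one_le_exp (by positivity)
      linarith
    have h1 := key t ht
    have h2 := key u hu
    have : dist (∏ i ∈ t, (1 + f i)) (∏ i ∈ u, (1 + f i))
        ≤ ‖∏ i ∈ t, (1 + f i) - ∏ i ∈ s₀, (1 + f i)‖
          + ‖∏ i ∈ u, (1 + f i) - ∏ i ∈ s₀, (1 + f i)‖ := by
      rw [dist_eq_norm]
      have : (∏ i ∈ t, (1 + f i)) - ∏ i ∈ u, (1 + f i)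
          = (∏ i ∈ t, (1 + f i) - ∏ i ∈ s₀, (1 + f i))
            - (∏ i ∈ u, (1 + f i) - ∏ i ∈ s₀, (1 + f i)) := by ring
      rw [this]
      exact norm_sub_le _ _
    linarith
  rcases cauchySeq_tendsto_of_complete hcauchy with ⟨L, hL⟩
  exact ⟨L, hL⟩

lemma norm_tprod_sub_prod_le (hf : Summable fun n => ‖f n‖) (s : Finset ℕ) :
    ‖(∏' n, (1 + f n)) - ∏ i ∈ s, (1 + f i)‖
      ≤ Real.exp (∑' n, ‖f n‖) * (Real.exp ((∑' n, ‖f n‖) - ∑ i ∈ s, ‖f i‖) - 1) := by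
  classical
  have hm := multipliable_one_add hf
  have hprod := hm.hasProd
  have htend : Tendsto (fun t : Finset ℕ => ‖∏ i ∈ t, (1 + f i) - ∏ i ∈ s, (1 + f i)‖)
      atTop (𝓝 ‖(∏' n, (1 + f n)) - ∏ i ∈ s, (1 + f i)‖) :=
    ((hprod.sub tendsto_const_nhds).norm)
  refine le_of_tendsto htend ?_
  filter_upwards [Filter.eventually_ge_atTop s] with t hts
  refine (norm_prod_sub_prod_le f hts).trans ?_
  have h1 : ∑ i ∈ s, ‖f i‖ ≤ ∑' n, ‖f n‖ := Summable.sum_le_tsum s (fun i _ => norm_nonneg _) hf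
  have h2 : ∑ i ∈ t \ s, ‖f i‖ ≤ (∑' n, ‖f n‖) - ∑ i ∈ s, ‖f i‖ := by
    have : ∑ i ∈ t \ s, ‖f i‖ + ∑ i ∈ s, ‖f i‖ = ∑ i ∈ t, ‖f i‖ :=
      Finset.sum_sdiff hts
    have h3 : ∑ i ∈ t, ‖f i‖ ≤ ∑' n, ‖f n‖ := Summable.sum_le_tsum t (fun i _ => norm_nonneg _) hf
    linarith
  have h4 : Real.exp (∑ i ∈ t \ s, ‖f i‖) - 1
      ≤ Real.exp ((∑' n, ‖f n‖) - ∑ i ∈ s, ‖f i‖) - 1 := by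
    have := Real.exp_le_exp.2 h2; linarith
  refine mul_le_mul (Real.exp_le_exp.2 h1) h4 ?_ (Real.exp_nonneg _)
  have h0 : (1:ℝ) ≤ Real.exp (∑ i ∈ t \ s, ‖f i‖) := Real.one_le_exp (by positivity)
  linarith

lemma tprod_ne_zero (hf : Summable fun n => ‖f n‖) (hne : ∀ n, 1 + f n ≠ 0) :
    (∏' n, (1 + f n)) ≠ 0 := by
  classical
  have htail : Tendsto (fun N => ∑' n, ‖f (n + N)‖) atTop (𝓝 0) :=
    tendsto_sum_nat_add (fun n => ‖f n‖)
  obtain ⟨N, hN⟩ :=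
    (htail.eventually (eventually_lt_nhds (Real.log_pos (by norm_num : (1:ℝ) < 3/2)))).exists
  set g := fun n => f (n + N) with hg
  have hfg : Summable fun n => ‖g n‖ := by
    have := (summable_nat_add_iff (f := fun n => ‖f n‖) N).2 hf
    exact this
  have hTg : ∑' n, ‖g n‖ < Real.log (3/2) := hN
  have hm' : Multipliable (fun n => 1 + g n) := multipliable_one_add hfg
  have hsplit := Multipliable.prod_mul_tprod_nat_mul' (f := fun n => 1 + f n) (k := N) hm'
  have hfin : (∏ i ∈ Finset.range N, (1 + f i)) ≠ 0 :=
    Finset.prod_ne_zero_iff.2 fun i _ => hne i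
  have htailne : (∏' n, (1 + g n)) ≠ 0 := by
    have hb := norm_tprod_sub_prod_le hfg (∅ : Finset ℕ)
    simp only [Finset.prod_empty, Finset.sum_empty, sub_zero] at hb
    have hTg0 : 0 ≤ ∑' n, ‖g n‖ := tsum_nonneg fun n => norm_nonneg _
    have hlt : Real.exp (∑' n, ‖g n‖) < 3/2 := by
      have := Real.exp_lt_exp.2 hTg
      rwa [Real.exp_log (by norm_num : (0:ℝ) < 3/2)] at this
    have hb2 : ‖(∏' n, (1 + g n)) - 1‖ < 3/4 := by
      refine lt_of_le_of_lt hb ?_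
      have h1 : (1:ℝ) ≤ Real.exp (∑' n, ‖g n‖) := Real.one_le_exp hTg0
      nlinarith
    intro h
    rw [h] at hb2
    simp only [zero_sub, norm_neg, norm_one] at hb2
    norm_num at hb2
  intro h
  rw [← hsplit] at h
  rcases mul_eq_zero.1 h with h' | h'
  · exact hfin h'
  · exact htailne h'

lemma tprod_eq_zero {F : ℕ → ℂ} {n₀ : ℕ} (h : F n₀ = 0) : (∏' n, F n) = 0 := by
  classical
  have : HasProd F 0 := by
    have hev : ∀ᶠ s : Finset ℕ in atTop, ∏ i ∈ s, F i = 0 := by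
      filter_upwards [Filter.eventually_ge_atTop ({n₀} : Finset ℕ)] with s hs
      exact Finset.prod_eq_zero (hs (Finset.mem_singleton_self n₀)) h
    exact Tendsto.congr' (by filter_upwards [hev] with s hs; exact hs.symm) tendsto_const_nhds
  exact this.tprod_eq

noncomputable section

/-- the `n`-th factor -/
def fct (τ : ℂ) (n : ℕ) (z : ℂ) : ℂ :=
  (1 - cexp (2*(Real.pi:ℂ)*I*(((n:ℂ)+1)*τ + z))) *
  (1 - cexp (2*(Real.pi:ℂ)*I*(((n:ℂ)+1)*τ - z)))

/-- the infinite product -/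
def PP (τ : ℂ) (z : ℂ) : ℂ := ∏' n, fct τ n z

variable {τ : ℂ} (hτ : 0 < τ.im)

lemma norm_cexp_two_pi (w : ℂ) : ‖cexp (2*(Real.pi:ℂ)*I*w)‖ = Real.exp (-(2*Real.pi*w.im)) := by
  rw [Complex.norm_exp]
  congr 1
  have : (2*(Real.pi:ℂ)*I*w) = (((2*Real.pi : ℝ)):ℂ) * (I*w) := by push_cast; ring
  rw [this, Complex.re_ofReal_mul, Complex.mul_re]
  simp

lemma rho_lt_one (hτ : 0 < τ.im) : Real.exp (-(2*Real.pi*τ.im)) < 1 := by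
  rw [Real.exp_lt_one_iff]
  have := Real.pi_pos
  nlinarith

lemma rho_pow (n : ℕ) : Real.exp (-(2*Real.pi*((n:ℝ)+1)*τ.im))
    = Real.exp (-(2*Real.pi*τ.im))^(n+1) := by
  rw [← Real.exp_nat_mul]
  congr 1
  push_cast
  ring

lemma norm_fct_sub_one_le (hτ : 0 < τ.im) {R : ℝ} (hR : 0 ≤ R) (n : ℕ) {z : ℂ} (hz : ‖z‖ ≤ R) :
    ‖fct τ n z - 1‖ ≤ (2*Real.exp (2*Real.pi*R) + Real.exp (2*Real.pi*R)^2)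
      * Real.exp (-(2*Real.pi*τ.im))^(n+1) := by
  set A := cexp (2*(Real.pi:ℂ)*I*(((n:ℂ)+1)*τ + z)) with hA
  set B := cexp (2*(Real.pi:ℂ)*I*(((n:ℂ)+1)*τ - z)) with hB
  have him1 : ((((n:ℕ):ℂ)+1)*τ + z).im = ((n:ℝ)+1)*τ.im + z.im := by
    simp [Complex.add_im, Complex.mul_im]
  have him2 : ((((n:ℕ):ℂ)+1)*τ - z).im = ((n:ℝ)+1)*τ.im - z.im := by
    simp [Complex.sub_im, Complex.mul_im]
  have hzim : |z.im| ≤ R := (Complex.abs_im_le_norm z).trans hz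
  have hρpos : (0:ℝ) < Real.exp (-(2*Real.pi*τ.im)) := Real.exp_pos _
  have hc1 : (1:ℝ) ≤ Real.exp (2*Real.pi*R) := Real.one_le_exp (by positivity)
  have hρle : Real.exp (-(2*Real.pi*τ.im))^(n+1) ≤ 1 := by
    apply pow_le_one₀ hρpos.le
    have := Real.pi_pos
    apply Real.exp_le_one_iff.mpr
    nlinarith
  have hnA : ‖A‖ ≤ Real.exp (2*Real.pi*R) * Real.exp (-(2*Real.pi*τ.im))^(n+1) := by
    rw [hA, norm_cexp_two_pi, him1]
    have : -(2*Real.pi*(((n:ℝ)+1)*τ.im + z.im))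
        = -(2*Real.pi*((n:ℝ)+1)*τ.im) + -(2*Real.pi*z.im) := by ring
    rw [this, Real.exp_add, rho_pow]
    have h1 : -z.im ≤ R := by have := abs_le.1 hzim; linarith [this.1]
    have := Real.pi_pos
    have hle : Real.exp (-(2*Real.pi*z.im)) ≤ Real.exp (2*Real.pi*R) :=
      Real.exp_le_exp.2 (by nlinarith)
    calc Real.exp (-(2*Real.pi*τ.im))^(n+1) * Real.exp (-(2*Real.pi*z.im))
        ≤ Real.exp (-(2*Real.pi*τ.im))^(n+1) * Real.exp (2*Real.pi*R) := by
          apply mul_le_mul_of_nonneg_left hle (by positivity)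
      _ = Real.exp (2*Real.pi*R) * Real.exp (-(2*Real.pi*τ.im))^(n+1) := mul_comm _ _
  have hnB : ‖B‖ ≤ Real.exp (2*Real.pi*R) * Real.exp (-(2*Real.pi*τ.im))^(n+1) := by
    rw [hB, norm_cexp_two_pi, him2]
    have : -(2*Real.pi*(((n:ℝ)+1)*τ.im - z.im))
        = -(2*Real.pi*((n:ℝ)+1)*τ.im) + (2*Real.pi*z.im) := by ring
    rw [this, Real.exp_add, rho_pow]
    have h1 : z.im ≤ R := by have := abs_le.1 hzim; linarith [this.2]
    have := Real.pi_pos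
    have hle : Real.exp (2*Real.pi*z.im) ≤ Real.exp (2*Real.pi*R) :=
      Real.exp_le_exp.2 (by nlinarith)
    calc Real.exp (-(2*Real.pi*τ.im))^(n+1) * Real.exp (2*Real.pi*z.im)
        ≤ Real.exp (-(2*Real.pi*τ.im))^(n+1) * Real.exp (2*Real.pi*R) := by
          apply mul_le_mul_of_nonneg_left hle (by positivity)
      _ = Real.exp (2*Real.pi*R) * Real.exp (-(2*Real.pi*τ.im))^(n+1) := mul_comm _ _
  have hkey : fct τ n z - 1 = A*B - A - B := by rw [fct]; ring
  rw [hkey]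
  have h1 : ‖A*B - A - B‖ ≤ ‖A‖*‖B‖ + ‖A‖ + ‖B‖ := by
    calc ‖A*B - A - B‖ ≤ ‖A*B - A‖ + ‖B‖ := norm_sub_le _ _
      _ ≤ ‖A*B‖ + ‖A‖ + ‖B‖ := by have := norm_sub_le (A*B) A; linarith
      _ = ‖A‖*‖B‖ + ‖A‖ + ‖B‖ := by rw [norm_mul]
  refine h1.trans ?_
  set ρn := Real.exp (-(2*Real.pi*τ.im))^(n+1) with hρn
  have hρn0 : 0 ≤ ρn := by positivity
  set c := Real.exp (2*Real.pi*R) with hc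
  have hAB : ‖A‖*‖B‖ ≤ c^2 * ρn := by
    have := mul_le_mul hnA hnB (norm_nonneg _) (by positivity)
    calc ‖A‖*‖B‖ ≤ (c*ρn)*(c*ρn) := this
      _ = c^2*ρn*ρn := by ring
      _ ≤ c^2*ρn*1 := by
          apply mul_le_mul_of_nonneg_left hρle (by positivity)
      _ = c^2*ρn := by ring
  nlinarith [hnA, hnB]

lemma summable_u (hτ : 0 < τ.im) (K : ℝ) :
    Summable (fun n : ℕ => K * Real.exp (-(2*Real.pi*τ.im))^(n+1)) := by
  have h0 : (0:ℝ) ≤ Real.exp (-(2*Real.pi*τ.im)) := (Real.exp_pos _).le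
  have h1 : Real.exp (-(2*Real.pi*τ.im)) < 1 := rho_lt_one hτ
  have := (summable_geometric_of_lt_one h0 h1).mul_left (K * Real.exp (-(2*Real.pi*τ.im)))
  refine this.congr fun n => ?_
  rw [pow_succ]
  ring

lemma summable_fct_sub_one (hτ : 0 < τ.im) (z : ℂ) :
    Summable (fun n => ‖fct τ n z - 1‖) := by
  refine Summable.of_nonneg_of_le (fun n => norm_nonneg _)
    (fun n => norm_fct_sub_one_le hτ (norm_nonneg z) n (le_refl ‖z‖))
    (summable_u hτ _)

lemma multipliable_fct (hτ : 0 < τ.im) (z : ℂ) : Multipliable (fun n => fct τ n z) := by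
  have := multipliable_one_add (f := fun n => fct τ n z - 1) (summable_fct_sub_one hτ z)
  refine this.congr fun n => by ring

lemma PP_eq_zero_iff (hτ : 0 < τ.im) (z : ℂ) :
    PP τ z = 0 ↔ ∃ n, fct τ n z = 0 := by
  constructor
  · intro h
    by_contra hc
    push_neg at hc
    have := tprod_ne_zero (f := fun n => fct τ n z - 1) (summable_fct_sub_one hτ z)
      (fun n => by have := hc n; intro h'; apply this; linear_combination h')
    apply this
    rw [← h, PP]
    apply tprod_congr
    intro n; ring
  · rintro ⟨n, hn⟩
    exact tprod_eq_zero hn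


lemma diff_fct (n : ℕ) : Differentiable ℂ (fct τ n) := by
  unfold fct
  fun_prop

lemma tendstoUniformlyOn_PP (hτ : 0 < τ.im) (R : ℝ) (hR : 0 ≤ R) :
    TendstoUniformlyOn (fun N z => ∏ n ∈ Finset.range N, fct τ n z) (PP τ)
      atTop (Metric.ball (0:ℂ) R) := by
  classical
  set K := (2*Real.exp (2*Real.pi*R) + Real.exp (2*Real.pi*R)^2) with hK
  set u := fun n : ℕ => K * Real.exp (-(2*Real.pi*τ.im))^(n+1) with hu
  have hsu : Summable u := summable_u hτ K
  have hu0 : ∀ n, 0 ≤ u n := by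
    intro n
    have : (0:ℝ) ≤ K := by positivity
    positivity
  set U := ∑' n, u n with hU
  set t := fun N => ∑' n, u (n + N) with ht
  have htt : Tendsto t atTop (𝓝 0) := tendsto_sum_nat_add u
  have hcont : Tendsto (fun x : ℝ => Real.exp U * (Real.exp x - 1)) (𝓝 0) (𝓝 0) := by
    have h2 : Tendsto (fun x : ℝ => Real.exp x - 1) (𝓝 0) (𝓝 0) := by
      simpa using (Real.continuous_exp.tendsto 0).sub (tendsto_const_nhds (x := (1:ℝ)))
    simpa using h2.const_mul (Real.exp U)
  have hcomp : Tendsto (fun N => Real.exp U * (Real.exp (t N) - 1)) atTop (𝓝 0) :=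
    hcont.comp htt
  rw [Metric.tendstoUniformlyOn_iff]
  intro ε hε
  filter_upwards [hcomp.eventually (eventually_lt_nhds hε)] with N hN z hz
  have hzR : ‖z‖ ≤ R := by
    rw [Metric.mem_ball, dist_zero_right] at hz
    exact hz.le
  set f := fun n => fct τ n z - 1 with hf
  have hfs : Summable fun n => ‖f n‖ := summable_fct_sub_one hτ z
  have hfb : ∀ n, ‖f n‖ ≤ u n := fun n => norm_fct_sub_one_le hτ hR n hzR
  have hPP : PP τ z = ∏' n, (1 + f n) := tprod_congr fun n => by rw [hf]; ring
  have hprod : ∏ n ∈ Finset.range N, fct τ n z = ∏ n ∈ Finset.range N, (1 + f n) :=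
    Finset.prod_congr rfl fun n _ => by rw [hf]; ring
  rw [dist_eq_norm, hPP, hprod]
  refine lt_of_le_of_lt (norm_tprod_sub_prod_le hfs (Finset.range N)) ?_
  refine lt_of_le_of_lt ?_ hN
  set S := ∑' n, ‖f n‖ with hS
  have hSU : S ≤ U := Summable.tsum_le_tsum hfb hfs hsu
  have htail : S - ∑ i ∈ Finset.range N, ‖f i‖ = ∑' n, ‖f (n + N)‖ := by
    have := Summable.sum_add_tsum_nat_add (f := fun n => ‖f n‖) N hfs
    linarith
  have htail_le : S - ∑ i ∈ Finset.range N, ‖f i‖ ≤ t N := by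
    rw [htail, ht]
    exact Summable.tsum_le_tsum (fun n => hfb (n + N))
      ((summable_nat_add_iff N).2 hfs) ((summable_nat_add_iff N).2 hsu)
  have h1 : Real.exp S ≤ Real.exp U := Real.exp_le_exp.2 hSU
  have h2 : Real.exp (S - ∑ i ∈ Finset.range N, ‖f i‖) - 1 ≤ Real.exp (t N) - 1 := by
    have := Real.exp_le_exp.2 htail_le; linarith
  have h3 : (0:ℝ) ≤ Real.exp (S - ∑ i ∈ Finset.range N, ‖f i‖) - 1 := by
    have : (1:ℝ) ≤ Real.exp (S - ∑ i ∈ Finset.range N, ‖f i‖) := by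
      apply Real.one_le_exp
      rw [htail]
      exact tsum_nonneg fun n => norm_nonneg _
    linarith
  exact mul_le_mul h1 h2 h3 (Real.exp_nonneg _)

lemma diff_PP (hτ : 0 < τ.im) : Differentiable ℂ (PP τ) := by
  intro z₀
  have hR : (0:ℝ) ≤ ‖z₀‖ + 1 := by positivity
  have h := (tendstoUniformlyOn_PP hτ (‖z₀‖+1) hR).tendstoLocallyUniformlyOn
  have hdiff : DifferentiableOn ℂ (PP τ) (Metric.ball (0:ℂ) (‖z₀‖+1)) := by
    refine h.differentiableOn ?_ Metric.isOpen_ball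
    filter_upwards with N
    exact (Differentiable.fun_finset_prod (fun n _ => diff_fct n)).differentiableOn
  have hz₀ : z₀ ∈ Metric.ball (0:ℂ) (‖z₀‖+1) := by
    rw [Metric.mem_ball, dist_zero_right]
    linarith
  exact (hdiff.differentiableAt (Metric.isOpen_ball.mem_nhds hz₀))

lemma fct_eq_zero_iff (n : ℕ) (z : ℂ) :
    fct τ n z = 0 ↔ (∃ m : ℤ, ((n:ℂ)+1)*τ + z = m) ∨ (∃ m : ℤ, ((n:ℂ)+1)*τ - z = m) := by
  have hπ : (2*(Real.pi:ℂ)*I) ≠ 0 := by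
    simp [Real.pi_ne_zero, Complex.I_ne_zero, Complex.ofReal_ne_zero]
  have key : ∀ w : ℂ, (1 - cexp (2*(Real.pi:ℂ)*I*w) = 0) ↔ ∃ m : ℤ, w = m := by
    intro w
    rw [sub_eq_zero, eq_comm, Complex.exp_eq_one_iff]
    constructor
    · rintro ⟨m, hm⟩
      refine ⟨m, ?_⟩
      have h2 : (2*(Real.pi:ℂ)*I) * w = (2*(Real.pi:ℂ)*I) * m := by
        rw [hm]; push_cast; ring
      exact mul_left_cancel₀ hπ h2
    · rintro ⟨m, hm⟩
      exact ⟨m, by rw [hm]; push_cast; ring⟩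
  rw [fct, mul_eq_zero, key, key]

lemma PP_eq_zero_iff' (hτ : 0 < τ.im) (z : ℂ) :
    PP τ z = 0 ↔ ∃ (m k : ℤ), k ≠ 0 ∧ z = (m:ℂ) + (k:ℂ)*τ := by
  rw [PP_eq_zero_iff hτ]
  constructor
  · rintro ⟨n, hn⟩
    rcases (fct_eq_zero_iff n z).1 hn with ⟨m, hm⟩ | ⟨m, hm⟩
    · refine ⟨m, -((n:ℤ)+1), by omega, ?_⟩
      push_cast
      linear_combination hm
    · refine ⟨-m, (n:ℤ)+1, by omega, ?_⟩
      push_cast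
      linear_combination -hm
  · rintro ⟨m, k, hk, rfl⟩
    rcases lt_trichotomy k 0 with h | h | h
    · refine ⟨(-k-1).toNat, ?_⟩
      rw [fct_eq_zero_iff]
      left
      refine ⟨m, ?_⟩
      have : (((-k-1).toNat : ℤ) : ℂ) = -(k:ℂ) - 1 := by
        rw [Int.toNat_of_nonneg (by omega)]
        push_cast; ring
      push_cast at this ⊢
      rw [this]
      ring
    · exact absurd h hk
    · refine ⟨(k-1).toNat, ?_⟩
      rw [fct_eq_zero_iff]
      right
      refine ⟨-m, ?_⟩
      have : (((k-1).toNat : ℤ) : ℂ) = (k:ℂ) - 1 := by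
        rw [Int.toNat_of_nonneg (by omega)]
        push_cast; ring
      push_cast at this ⊢
      rw [this]
      ring

lemma PP_zero_ne_zero (hτ : 0 < τ.im) : PP τ 0 ≠ 0 := by
  intro h
  rcases (PP_eq_zero_iff' hτ 0).1 h with ⟨m, k, hk, hmk⟩
  have him : (0:ℂ).im = ((m:ℂ) + (k:ℂ)*τ).im := by rw [hmk]
  simp [Complex.add_im, Complex.mul_im] at him
  rcases him with h' | h'
  · exact hk (by exact_mod_cast h')
  · linarith


lemma sin_shift_identity (τ z : ℂ) :
    Complex.sin ((Real.pi:ℂ)*(z+τ)) * (1 - cexp (-(2*(Real.pi:ℂ)*I*z)))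
      = -cexp (-((Real.pi:ℂ)*I*τ)) * cexp (-(2*(Real.pi:ℂ)*I*z)) * Complex.sin ((Real.pi:ℂ)*z)
        * (1 - cexp (2*(Real.pi:ℂ)*I*(τ+z))) := by
  have hu : cexp ((Real.pi:ℂ)*I*z) ≠ 0 := Complex.exp_ne_zero _
  have ht : cexp ((Real.pi:ℂ)*I*τ) ≠ 0 := Complex.exp_ne_zero _
  rw [Complex.sin, Complex.sin,
      show -((Real.pi:ℂ)*(z+τ))*I = -((Real.pi:ℂ)*I*z + (Real.pi:ℂ)*I*τ) by ring,
      show ((Real.pi:ℂ)*(z+τ))*I = (Real.pi:ℂ)*I*z + (Real.pi:ℂ)*I*τ by ring,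
      show -((Real.pi:ℂ)*z)*I = -((Real.pi:ℂ)*I*z) by ring,
      show ((Real.pi:ℂ)*z)*I = (Real.pi:ℂ)*I*z by ring,
      show -(2*(Real.pi:ℂ)*I*z) = -((Real.pi:ℂ)*I*z + (Real.pi:ℂ)*I*z) by ring,
      show (2*(Real.pi:ℂ)*I*(τ+z)) = ((Real.pi:ℂ)*I*τ + (Real.pi:ℂ)*I*τ)
        + ((Real.pi:ℂ)*I*z + (Real.pi:ℂ)*I*z) by ring]
  simp only [Complex.exp_add, Complex.exp_neg]
  field_simp
  ring

lemma prod_shift (τ : ℂ) (n : ℕ) (z : ℂ) :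
    (∏ k ∈ Finset.range n, fct τ k (z+τ)) * (1 - cexp (2*(Real.pi:ℂ)*I*(τ+z)))
        * (1 - cexp (2*(Real.pi:ℂ)*I*((n:ℂ)*τ - z)))
      = (∏ k ∈ Finset.range n, fct τ k z) * (1 - cexp (2*(Real.pi:ℂ)*I*(((n:ℂ)+1)*τ + z)))
        * (1 - cexp (-(2*(Real.pi:ℂ)*I*z))) := by
  induction n with
  | zero =>
    simp only [Finset.range_zero, Finset.prod_empty, one_mul, Nat.cast_zero]
    rw [show (2*(Real.pi:ℂ)*I*((0:ℂ)*τ - z)) = -(2*(Real.pi:ℂ)*I*z) by ring,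
        show ((0:ℂ)+1)*τ + z = τ + z by ring]
  | succ n ih =>
    rw [Finset.prod_range_succ, Finset.prod_range_succ]
    have hf1 : fct τ n (z+τ)
        = (1 - cexp (2*(Real.pi:ℂ)*I*((((n:ℂ)+1)+1)*τ + z)))
          * (1 - cexp (2*(Real.pi:ℂ)*I*((n:ℂ)*τ - z))) := by
      rw [fct]
      congr 2
      · congr 1; ring
      · congr 1; ring
    have hf2 : fct τ n z
        = (1 - cexp (2*(Real.pi:ℂ)*I*(((n:ℂ)+1)*τ + z)))
          * (1 - cexp (2*(Real.pi:ℂ)*I*(((n:ℂ)+1)*τ - z))) := rfl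
    push_cast
    rw [hf1, hf2]
    linear_combination ((1 - cexp (2*(Real.pi:ℂ)*I*((((n:ℂ)+1)+1)*τ + z)))
      * (1 - cexp (2*(Real.pi:ℂ)*I*(((n:ℂ)+1)*τ - z)))) * ih

lemma tendsto_cexp_aux (hτ : 0 < τ.im) (a : ℂ) :
    Tendsto (fun n : ℕ => cexp (2*(Real.pi:ℂ)*I*((n:ℂ)*τ + a))) atTop (𝓝 0) := by
  rw [tendsto_zero_iff_norm_tendsto_zero]
  have hnorm : ∀ n : ℕ, ‖cexp (2*(Real.pi:ℂ)*I*((n:ℂ)*τ + a))‖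
      = Real.exp (-(2*Real.pi*τ.im))^n * Real.exp (-(2*Real.pi*a.im)) := by
    intro n
    rw [norm_cexp_two_pi]
    have him : ((n:ℂ)*τ + a).im = (n:ℝ)*τ.im + a.im := by
      simp [Complex.add_im, Complex.mul_im]
    rw [him, show -(2*Real.pi*((n:ℝ)*τ.im + a.im))
        = (n:ℝ)*(-(2*Real.pi*τ.im)) + -(2*Real.pi*a.im) by ring,
      Real.exp_add, ← Real.exp_nat_mul]
  have h0 : (0:ℝ) ≤ Real.exp (-(2*Real.pi*τ.im)) := (Real.exp_pos _).le
  have h1 : Real.exp (-(2*Real.pi*τ.im)) < 1 := rho_lt_one hτ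
  have := (tendsto_pow_atTop_nhds_zero_of_lt_one h0 h1).mul_const
    (Real.exp (-(2*Real.pi*a.im)))
  rw [zero_mul] at this
  exact this.congr fun n => (hnorm n).symm

lemma PP_shift (hτ : 0 < τ.im) (z : ℂ) :
    PP τ (z+τ) * (1 - cexp (2*(Real.pi:ℂ)*I*(τ+z)))
      = PP τ z * (1 - cexp (-(2*(Real.pi:ℂ)*I*z))) := by
  have hL : Tendsto (fun n : ℕ =>
      (∏ k ∈ Finset.range n, fct τ k (z+τ)) * (1 - cexp (2*(Real.pi:ℂ)*I*(τ+z)))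
        * (1 - cexp (2*(Real.pi:ℂ)*I*((n:ℂ)*τ - z)))) atTop
      (𝓝 (PP τ (z+τ) * (1 - cexp (2*(Real.pi:ℂ)*I*(τ+z))) * (1 - 0))) := by
    refine Tendsto.mul (Tendsto.mul ?_ tendsto_const_nhds) ?_
    · exact (multipliable_fct hτ (z+τ)).hasProd.tendsto_prod_nat
    · refine Tendsto.sub tendsto_const_nhds ?_
      have := tendsto_cexp_aux hτ (-z)
      exact this.congr fun n => by
        rw [show (n:ℂ)*τ + -z = (n:ℂ)*τ - z from by ring]
  have hR : Tendsto (fun n : ℕ =>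
      (∏ k ∈ Finset.range n, fct τ k z) * (1 - cexp (2*(Real.pi:ℂ)*I*(((n:ℂ)+1)*τ + z)))
        * (1 - cexp (-(2*(Real.pi:ℂ)*I*z)))) atTop
      (𝓝 (PP τ z * (1 - 0) * (1 - cexp (-(2*(Real.pi:ℂ)*I*z))))) := by
    refine Tendsto.mul (Tendsto.mul ?_ ?_) tendsto_const_nhds
    · exact (multipliable_fct hτ z).hasProd.tendsto_prod_nat
    · refine Tendsto.sub tendsto_const_nhds ?_
      have := tendsto_cexp_aux hτ (τ + z)
      exact this.congr fun n => by congr 2; push_cast; ring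
  have heq : (fun n : ℕ =>
      (∏ k ∈ Finset.range n, fct τ k (z+τ)) * (1 - cexp (2*(Real.pi:ℂ)*I*(τ+z)))
        * (1 - cexp (2*(Real.pi:ℂ)*I*((n:ℂ)*τ - z))))
      = (fun n : ℕ =>
      (∏ k ∈ Finset.range n, fct τ k z) * (1 - cexp (2*(Real.pi:ℂ)*I*(((n:ℂ)+1)*τ + z)))
        * (1 - cexp (-(2*(Real.pi:ℂ)*I*z)))) := funext fun n => prod_shift τ n z
  rw [heq] at hL
  have := tendsto_nhds_unique hL hR
  rw [sub_zero] at this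
  rw [mul_one] at this
  linear_combination this

lemma theta_shift (hτ : 0 < τ.im) (z : ℂ) :
    Complex.sin ((Real.pi:ℂ)*(z+τ)) * PP τ (z+τ)
      = -cexp (-((Real.pi:ℂ)*I*τ)) * cexp (-(2*(Real.pi:ℂ)*I*z))
        * (Complex.sin ((Real.pi:ℂ)*z) * PP τ z) := by
  by_cases h : (1:ℂ) - cexp (2*(Real.pi:ℂ)*I*(τ+z)) = 0
  · have hexp : cexp (2*(Real.pi:ℂ)*I*(τ+z)) = 1 := by linear_combination -h
    rcases Complex.exp_eq_one_iff.1 hexp with ⟨m, hm⟩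
    have hπ : (2*(Real.pi:ℂ)*I) ≠ 0 := by
      simp [Real.pi_ne_zero, Complex.I_ne_zero, Complex.ofReal_ne_zero]
    have hzm : τ + z = m := by
      have h2 : (2*(Real.pi:ℂ)*I) * (τ+z) = (2*(Real.pi:ℂ)*I) * m := by
        rw [hm]; push_cast; ring
      exact mul_left_cancel₀ hπ h2
    have hsin : Complex.sin ((Real.pi:ℂ)*(z+τ)) = 0 := by
      rw [show (Real.pi:ℂ)*(z+τ) = (m:ℂ)*(Real.pi:ℂ) by rw [← hzm]; ring]
      exact Complex.sin_int_mul_pi m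
    have hPP : PP τ z = 0 := by
      apply tprod_eq_zero (n₀ := 0)
      rw [fct]
      have h0 : (((0:ℕ):ℂ)+1)*τ + z = τ + z := by push_cast; ring
      rw [h0, hzm]
      have h1 : cexp (2*(Real.pi:ℂ)*I*(m:ℂ)) = 1 := by
        rw [show 2*(Real.pi:ℂ)*I*(m:ℂ) = (m:ℤ)*(2*(Real.pi:ℂ)*I) by push_cast; ring]
        exact Complex.exp_int_mul_two_pi_mul_I m
      rw [h1, sub_self, zero_mul]
    rw [hsin, hPP]
    ring
  · apply mul_right_cancel₀ h
    have S1 := PP_shift hτ z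
    have S2 := sin_shift_identity τ z
    linear_combination Complex.sin ((Real.pi:ℂ)*(z+τ)) * S1 + PP τ z * S2


lemma fct_add_one (n : ℕ) (z : ℂ) : fct τ n (z+1) = fct τ n z := by
  rw [fct, fct]
  have h1 : cexp (2*(Real.pi:ℂ)*I*(((n:ℂ)+1)*τ + (z+1)))
      = cexp (2*(Real.pi:ℂ)*I*(((n:ℂ)+1)*τ + z)) * cexp (2*(Real.pi:ℂ)*I) := by
    rw [← Complex.exp_add]; congr 1; ring
  have h2 : cexp (2*(Real.pi:ℂ)*I*(((n:ℂ)+1)*τ - (z+1))) * cexp (2*(Real.pi:ℂ)*I)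
      = cexp (2*(Real.pi:ℂ)*I*(((n:ℂ)+1)*τ - z)) := by
    rw [← Complex.exp_add]; congr 1; ring
  have he : cexp (2*(Real.pi:ℂ)*I) = 1 := Complex.exp_two_pi_mul_I
  rw [h1, he, mul_one, ← h2, he, mul_one]

lemma PP_add_one (z : ℂ) : PP τ (z+1) = PP τ z := tprod_congr fun n => fct_add_one n z

/-- The theta function. -/
def theta (τ : ℂ) : ℂ → ℂ :=
  fun z => ((Real.pi:ℂ) * PP τ 0)⁻¹ * (Complex.sin ((Real.pi:ℂ)*z) * PP τ z)

lemma diff_theta (hτ : 0 < τ.im) : Differentiable ℂ (theta τ) := by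
  apply Differentiable.const_mul
  apply Differentiable.mul
  · exact Complex.differentiable_sin.comp (differentiable_id.const_mul _)
  · exact diff_PP hτ

lemma deriv_theta (hτ : 0 < τ.im) : deriv (theta τ) 0 = 1 := by
  have hπ : ((Real.pi:ℂ)) ≠ 0 := Complex.ofReal_ne_zero.2 Real.pi_ne_zero
  have hP0 : PP τ 0 ≠ 0 := PP_zero_ne_zero hτ
  have hsin : HasDerivAt (fun z : ℂ => Complex.sin ((Real.pi:ℂ)*z))
      (Complex.cos ((Real.pi:ℂ)*0) * ((Real.pi:ℂ)*1)) 0 := by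
    exact (Complex.hasDerivAt_sin ((Real.pi:ℂ)*0)).comp 0 ((hasDerivAt_id 0).const_mul _)
  have hPd : HasDerivAt (PP τ) (deriv (PP τ) 0) 0 := (diff_PP hτ 0).hasDerivAt
  have hmul := hsin.fun_mul hPd
  have := hmul.const_mul (((Real.pi:ℂ) * PP τ 0)⁻¹)
  have hder := this.deriv
  show deriv (fun z => ((Real.pi:ℂ) * PP τ 0)⁻¹ * (Complex.sin ((Real.pi:ℂ)*z) * PP τ z)) 0 = 1
  rw [hder]
  simp only [mul_zero, Complex.cos_zero, Complex.sin_zero, mul_one, one_mul, zero_mul, add_zero]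
  field_simp

lemma theta_add_one (z : ℂ) : theta τ (z+1) = - theta τ z := by
  simp only [theta]
  rw [PP_add_one]
  have : Complex.sin ((Real.pi:ℂ)*(z+1)) = - Complex.sin ((Real.pi:ℂ)*z) := by
    rw [show (Real.pi:ℂ)*(z+1) = (Real.pi:ℂ)*z + Real.pi by ring, Complex.sin_add]
    simp [Complex.sin_pi, Complex.cos_pi]
  rw [this]
  ring

lemma theta_add_tau (hτ : 0 < τ.im) (z : ℂ) :
    theta τ (z + τ) = - cexp (-(Real.pi:ℂ)*I*τ) * cexp (-2*(Real.pi:ℂ)*I*z) * theta τ z := by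
  have h := theta_shift hτ z
  simp only [theta]
  rw [show (-(Real.pi:ℂ)*I*τ) = -((Real.pi:ℂ)*I*τ) by ring,
      show (-2*(Real.pi:ℂ)*I*z) = -(2*(Real.pi:ℂ)*I*z) by ring]
  rw [show (Real.pi:ℂ)*(z+τ) = (Real.pi:ℂ)*(z+τ) from rfl]
  calc ((Real.pi:ℂ) * PP τ 0)⁻¹ * (Complex.sin ((Real.pi:ℂ)*(z+τ)) * PP τ (z+τ))
      = ((Real.pi:ℂ) * PP τ 0)⁻¹ * (-cexp (-((Real.pi:ℂ)*I*τ)) * cexp (-(2*(Real.pi:ℂ)*I*z))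
          * (Complex.sin ((Real.pi:ℂ)*z) * PP τ z)) := by rw [h]
    _ = -cexp (-((Real.pi:ℂ)*I*τ)) * cexp (-(2*(Real.pi:ℂ)*I*z))
          * (((Real.pi:ℂ) * PP τ 0)⁻¹ * (Complex.sin ((Real.pi:ℂ)*z) * PP τ z)) := by ring

lemma theta_eq_zero_iff (hτ : 0 < τ.im) (z : ℂ) :
    theta τ z = 0 ↔ ∃ m n : ℤ, z = (m:ℂ) + (n:ℂ)*τ := by
  have hπ : ((Real.pi:ℂ)) ≠ 0 := Complex.ofReal_ne_zero.2 Real.pi_ne_zero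
  have hP0 : PP τ 0 ≠ 0 := PP_zero_ne_zero hτ
  have hc : ((Real.pi:ℂ) * PP τ 0)⁻¹ ≠ 0 := inv_ne_zero (mul_ne_zero hπ hP0)
  simp only [theta]
  rw [mul_eq_zero, mul_eq_zero]
  constructor
  · rintro (h | h | h)
    · exact absurd h hc
    · rcases Complex.sin_eq_zero_iff.1 h with ⟨k, hk⟩
      refine ⟨k, 0, ?_⟩
      have : z = (k:ℂ) := by
        have := mul_left_cancel₀ hπ (show (Real.pi:ℂ)*z = (Real.pi:ℂ)*(k:ℂ) by
          rw [hk]; ring)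
        exact this
      rw [this]; push_cast; ring
    · rcases (PP_eq_zero_iff' hτ z).1 h with ⟨m, k, hk, rfl⟩
      exact ⟨m, k, rfl⟩
  · rintro ⟨m, n, rfl⟩
    by_cases hn : n = 0
    · right; left
      subst hn
      rw [show (Real.pi:ℂ)*((m:ℂ) + (0:ℤ)*τ) = (m:ℂ)*(Real.pi:ℂ) by push_cast; ring]
      exact Complex.sin_int_mul_pi m
    · right; right
      exact (PP_eq_zero_iff' hτ _).2 ⟨m, n, hn, rfl⟩



section Uniqueness

variable {θ ψ : ℂ → ℂ}

/-- translation of derivative under the `z+1` functional equation -/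
lemma deriv_add_one (hθd : Differentiable ℂ θ) (hθp1 : ∀ z, θ (z+1) = - θ z) (z : ℂ) :
    deriv θ (z + 1) = - deriv θ z := by
  have hfe : (fun y => θ (y + 1)) = fun y => - θ y := funext hθp1
  calc deriv θ (z+1) = deriv (fun y => θ (y+1)) z := (deriv_comp_add_const θ 1 z).symm
    _ = deriv (fun y => - θ y) z := by rw [hfe]
    _ = - deriv θ z := deriv.neg

lemma deriv_add_tau (hτ : 0 < τ.im) (hθd : Differentiable ℂ θ)
    (hθpτ : ∀ z, θ (z + τ) = - cexp (-(Real.pi:ℂ)*I*τ) * cexp (-2*(Real.pi:ℂ)*I*z) * θ z)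
    {z : ℂ} (hz : θ z = 0) :
    deriv θ (z + τ) = - cexp (-(Real.pi:ℂ)*I*τ) * cexp (-2*(Real.pi:ℂ)*I*z) * deriv θ z := by
  have hfe : (fun y => θ (y + τ))
      = fun y => - cexp (-(Real.pi:ℂ)*I*τ) * cexp (-2*(Real.pi:ℂ)*I*y) * θ y := funext hθpτ
  have hlin : HasDerivAt (fun y : ℂ => -2*(Real.pi:ℂ)*I*y) (-2*(Real.pi:ℂ)*I) z := by
    simpa using (hasDerivAt_id z).const_mul (-2*(Real.pi:ℂ)*I)
  have hexp : HasDerivAt (fun y : ℂ => cexp (-2*(Real.pi:ℂ)*I*y))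
      (cexp (-2*(Real.pi:ℂ)*I*z) * (-2*(Real.pi:ℂ)*I)) z := hlin.cexp
  have hmul : HasDerivAt (fun y : ℂ => - cexp (-(Real.pi:ℂ)*I*τ) * cexp (-2*(Real.pi:ℂ)*I*y))
      (- cexp (-(Real.pi:ℂ)*I*τ) * (cexp (-2*(Real.pi:ℂ)*I*z) * (-2*(Real.pi:ℂ)*I))) z :=
    hexp.const_mul _
  have hprod := hmul.fun_mul (hθd z).hasDerivAt
  calc deriv θ (z+τ) = deriv (fun y => θ (y+τ)) z := (deriv_comp_add_const θ τ z).symm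
    _ = deriv (fun y => - cexp (-(Real.pi:ℂ)*I*τ) * cexp (-2*(Real.pi:ℂ)*I*y) * θ y) z := by
        rw [hfe]
    _ = - cexp (-(Real.pi:ℂ)*I*τ) * cexp (-2*(Real.pi:ℂ)*I*z) * deriv θ z := by
        rw [hprod.deriv, hz]
        ring

lemma mult_ne_zero (z : ℂ) : - cexp (-(Real.pi:ℂ)*I*τ) * cexp (-2*(Real.pi:ℂ)*I*z) ≠ 0 := by
  apply mul_ne_zero
  · simpa using Complex.exp_ne_zero (-(Real.pi:ℂ)*I*τ)
  · exact Complex.exp_ne_zero _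

lemma lattice_mem (m n : ℤ) : ((m:ℂ) + (n:ℂ)*τ) ∈ lattice τ := ⟨m, n, rfl⟩

lemma lattice_add_int (hz : z ∈ lattice τ) (k : ℤ) : z + (k:ℂ) ∈ lattice τ := by
  rcases hz with ⟨m, n, rfl⟩
  exact ⟨m + k, n, by push_cast; ring⟩

lemma lattice_add_int_tau (hz : z ∈ lattice τ) (k : ℤ) : z + (k:ℂ)*τ ∈ lattice τ := by
  rcases hz with ⟨m, n, rfl⟩
  exact ⟨m, n + k, by push_cast; ring⟩

lemma deriv_ne_zero_on_lattice (hτ : 0 < τ.im) (hθd : Differentiable ℂ θ)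
    (hθ1 : deriv θ 0 = 1) (hθz : ∀ z, θ z = 0 ↔ z ∈ lattice τ)
    (hθp1 : ∀ z, θ (z+1) = - θ z)
    (hθpτ : ∀ z, θ (z + τ) = - cexp (-(Real.pi:ℂ)*I*τ) * cexp (-2*(Real.pi:ℂ)*I*z) * θ z) :
    ∀ z ∈ lattice τ, deriv θ z ≠ 0 := by
  have h1iff : ∀ z : ℂ, (deriv θ (z + 1) = 0 ↔ deriv θ z = 0) := by
    intro z
    rw [deriv_add_one hθd hθp1, neg_eq_zero]
  have h1iff' : ∀ z : ℂ, (deriv θ (z - 1) = 0 ↔ deriv θ z = 0) := by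
    intro z
    have := h1iff (z - 1)
    rw [sub_add_cancel] at this
    exact this.symm
  have hm : ∀ (m : ℤ) (z : ℂ), deriv θ (z + (m:ℂ)) = 0 ↔ deriv θ z = 0 := by
    intro m
    induction m using Int.induction_on with
    | zero => intro z; norm_num
    | succ n ih =>
      intro z
      push_cast
      rw [show z + ((n:ℂ)+1) = (z + (n:ℂ)) + 1 from by ring, h1iff]
      have := ih z
      push_cast at this
      exact this
    | pred n ih =>
      intro z
      push_cast
      rw [show z + (-(n:ℂ)-1) = (z + -(n:ℂ)) - 1 from by ring, h1iff']
      have := ih z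
      push_cast at this
      exact this
  have hτiff : ∀ z : ℂ, θ z = 0 → (deriv θ (z + τ) = 0 ↔ deriv θ z = 0) := by
    intro z hz
    rw [deriv_add_tau hτ hθd hθpτ hz, mul_eq_zero]
    simp only [mult_ne_zero z, false_or]
  have hτiff' : ∀ z : ℂ, θ (z - τ) = 0 → (deriv θ (z - τ) = 0 ↔ deriv θ z = 0) := by
    intro z hz
    have := hτiff (z - τ) hz
    rw [sub_add_cancel] at this
    exact this.symm
  have hn : ∀ (k : ℤ) (z : ℂ), z ∈ lattice τ →
      (deriv θ (z + (k:ℂ)*τ) = 0 ↔ deriv θ z = 0) := by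
    intro k
    induction k using Int.induction_on with
    | zero => intro z _; norm_num
    | succ n ih =>
      intro z hz
      push_cast
      rw [show z + ((n:ℂ)+1)*τ = (z + (n:ℂ)*τ) + τ from by ring, hτiff]
      · have := ih z hz
        push_cast at this
        exact this
      · rw [hθz]
        have := lattice_add_int_tau hz n
        push_cast at this
        exact this
    | pred n ih =>
      intro z hz
      push_cast
      rw [show z + (-(n:ℂ)-1)*τ = (z + -(n:ℂ)*τ) - τ from by ring, hτiff']
      · have := ih z hz
        push_cast at this
        exact this
      · rw [hθz]
        have := lattice_add_int_tau hz (-(n:ℤ)-1)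
        push_cast at this
        rw [show z + -(n:ℂ)*τ - τ = z + (-(n:ℂ)-1)*τ from by ring]
        exact this
  rintro z ⟨m, k, rfl⟩
  have hmem : ((m:ℂ)) ∈ lattice τ := ⟨m, 0, by push_cast; ring⟩
  rw [show (m:ℂ) + (k:ℂ)*τ = (m:ℂ) + (k:ℂ)*τ from rfl]
  intro h0
  have h1 := (hn k (m:ℂ) hmem).1 h0
  have h2 := (hm m 0).1 (by rw [zero_add]; exact h1)
  rw [hθ1] at h2
  exact one_ne_zero h2


lemma dslope_analyticAt (hθd : Differentiable ℂ θ) (p : ℂ) :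
    AnalyticAt ℂ (dslope θ p) p := by
  rcases (hθd.analyticAt p) with ⟨q, hq⟩
  exact (HasFPowerSeriesAt.has_fpower_series_dslope_fslope hq).analyticAt

/-- the quotient function -/
def quot (θ ψ : ℂ → ℂ) : ℂ → ℂ :=
  fun z => if θ z = 0 then deriv ψ z / deriv θ z else ψ z / θ z

lemma quot_diff (hτ : 0 < τ.im) (hθd : Differentiable ℂ θ) (hψd : Differentiable ℂ ψ)
    (hθ1 : deriv θ 0 = 1) (hθz : ∀ z, θ z = 0 ↔ z ∈ lattice τ)
    (hψz : ∀ z, ψ z = 0 ↔ z ∈ lattice τ)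
    (hθp1 : ∀ z, θ (z+1) = - θ z)
    (hθpτ : ∀ z, θ (z + τ) = - cexp (-(Real.pi:ℂ)*I*τ) * cexp (-2*(Real.pi:ℂ)*I*z) * θ z) :
    Differentiable ℂ (quot θ ψ) := by
  intro p
  by_cases hp : θ p = 0
  · -- lattice point
    have hpl : p ∈ lattice τ := (hθz p).1 hp
    have hψp : ψ p = 0 := (hψz p).2 hpl
    have hd : deriv θ p ≠ 0 :=
      deriv_ne_zero_on_lattice hτ hθd hθ1 hθz hθp1 hθpτ p hpl
    have hψa : AnalyticAt ℂ (dslope ψ p) p := dslope_analyticAt hψd p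
    have hθa : AnalyticAt ℂ (dslope θ p) p := dslope_analyticAt hθd p
    have hθsp : dslope θ p p ≠ 0 := by rwa [dslope_same]
    have hne : ∀ᶠ z in 𝓝 p, dslope θ p z ≠ 0 :=
      hθa.continuousAt.eventually_ne hθsp
    have heq : quot θ ψ =ᶠ[𝓝 p] fun z => dslope ψ p z / dslope θ p z := by
      filter_upwards [hne] with z hz
      by_cases hzp : z = p
      · subst hzp
        simp only [quot, if_pos hp, dslope_same]
      · have hsub : z - p ≠ 0 := sub_ne_zero.2 hzp
        have hθdz : θ z = (z - p) * dslope θ p z := by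
          have h5 := sub_smul_dslope θ p z
          rw [smul_eq_mul, hp, sub_zero] at h5
          exact h5.symm
        have hψdz : ψ z = (z - p) * dslope ψ p z := by
          have h5 := sub_smul_dslope ψ p z
          rw [smul_eq_mul, hψp, sub_zero] at h5
          exact h5.symm
        have hθz0 : θ z ≠ 0 := by
          rw [hθdz]
          exact mul_ne_zero hsub hz
        simp only [quot, if_neg hθz0]
        rw [hθdz, hψdz, mul_div_mul_left _ _ hsub]
    rw [Filter.EventuallyEq.differentiableAt_iff heq]
    exact ((hψa.div hθa hθsp).differentiableAt)
  · have hne : ∀ᶠ z in 𝓝 p, θ z ≠ 0 := (hθd p).continuousAt.eventually_ne hp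
    have heq : quot θ ψ =ᶠ[𝓝 p] fun z => ψ z / θ z := by
      filter_upwards [hne] with z hz
      simp only [quot, if_neg hz]
    rw [Filter.EventuallyEq.differentiableAt_iff heq]
    exact (hψd p).div (hθd p) hp

lemma quot_add_one (hθd : Differentiable ℂ θ) (hψd : Differentiable ℂ ψ)
    (hθz : ∀ z, θ z = 0 ↔ z ∈ lattice τ) (hψz : ∀ z, ψ z = 0 ↔ z ∈ lattice τ)
    (hθp1 : ∀ z, θ (z+1) = - θ z) (hψp1 : ∀ z, ψ (z+1) = - ψ z) (z : ℂ) :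
    quot θ ψ (z + 1) = quot θ ψ z := by
  by_cases hz : θ z = 0
  · have hz1 : θ (z+1) = 0 := by rw [hθp1, hz, neg_zero]
    simp only [quot, if_pos hz, if_pos hz1]
    rw [deriv_add_one hθd hθp1, deriv_add_one hψd hψp1, neg_div_neg_eq]
  · have hz1 : θ (z+1) ≠ 0 := by rw [hθp1]; simpa using hz
    simp only [quot, if_neg hz, if_neg hz1]
    rw [hθp1, hψp1, neg_div_neg_eq]

lemma quot_add_tau (hτ : 0 < τ.im) (hθd : Differentiable ℂ θ) (hψd : Differentiable ℂ ψ)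
    (hθz : ∀ z, θ z = 0 ↔ z ∈ lattice τ) (hψz : ∀ z, ψ z = 0 ↔ z ∈ lattice τ)
    (hθpτ : ∀ z, θ (z + τ) = - cexp (-(Real.pi:ℂ)*I*τ) * cexp (-2*(Real.pi:ℂ)*I*z) * θ z)
    (hψpτ : ∀ z, ψ (z + τ) = - cexp (-(Real.pi:ℂ)*I*τ) * cexp (-2*(Real.pi:ℂ)*I*z) * ψ z)
    (z : ℂ) : quot θ ψ (z + τ) = quot θ ψ z := by
  set c := - cexp (-(Real.pi:ℂ)*I*τ) * cexp (-2*(Real.pi:ℂ)*I*z) with hc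
  have hcne : c ≠ 0 := mult_ne_zero z
  by_cases hz : θ z = 0
  · have hψ0 : ψ z = 0 := (hψz z).2 ((hθz z).1 hz)
    have hzτ : θ (z+τ) = 0 := by rw [hθpτ, hz, mul_zero]
    simp only [quot, if_pos hz, if_pos hzτ]
    rw [deriv_add_tau hτ hθd hθpτ hz, deriv_add_tau hτ hψd hψpτ hψ0]
    rw [← hc, mul_div_mul_left _ _ hcne]
  · have hzτ : θ (z+τ) ≠ 0 := by
      rw [hθpτ, ← hc]
      exact mul_ne_zero hcne hz
    simp only [quot, if_neg hz, if_neg hzτ]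
    rw [hθpτ, hψpτ, ← hc, mul_div_mul_left _ _ hcne]


lemma quot_periodic (hτ : 0 < τ.im) (hθd : Differentiable ℂ θ) (hψd : Differentiable ℂ ψ)
    (hθz : ∀ z, θ z = 0 ↔ z ∈ lattice τ) (hψz : ∀ z, ψ z = 0 ↔ z ∈ lattice τ)
    (hθp1 : ∀ z, θ (z+1) = - θ z) (hψp1 : ∀ z, ψ (z+1) = - ψ z)
    (hθpτ : ∀ z, θ (z + τ) = - cexp (-(Real.pi:ℂ)*I*τ) * cexp (-2*(Real.pi:ℂ)*I*z) * θ z)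
    (hψpτ : ∀ z, ψ (z + τ) = - cexp (-(Real.pi:ℂ)*I*τ) * cexp (-2*(Real.pi:ℂ)*I*z) * ψ z) :
    ∀ (m n : ℤ) (w : ℂ), quot θ ψ (w + (m:ℂ) + (n:ℂ)*τ) = quot θ ψ w := by
  have hq1 : ∀ w : ℂ, quot θ ψ (w + 1) = quot θ ψ w :=
    quot_add_one hθd hψd hθz hψz hθp1 hψp1
  have hq1' : ∀ w : ℂ, quot θ ψ (w - 1) = quot θ ψ w := by
    intro w
    have := hq1 (w - 1)
    rw [sub_add_cancel] at this
    exact this.symm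
  have hqτ : ∀ w : ℂ, quot θ ψ (w + τ) = quot θ ψ w :=
    quot_add_tau hτ hθd hψd hθz hψz hθpτ hψpτ
  have hqτ' : ∀ w : ℂ, quot θ ψ (w - τ) = quot θ ψ w := by
    intro w
    have := hqτ (w - τ)
    rw [sub_add_cancel] at this
    exact this.symm
  have hm : ∀ (m : ℤ) (w : ℂ), quot θ ψ (w + (m:ℂ)) = quot θ ψ w := by
    intro m
    induction m using Int.induction_on with
    | zero => intro w; norm_num
    | succ n ih =>
      intro w
      push_cast
      rw [show w + ((n:ℂ)+1) = (w + (n:ℂ)) + 1 from by ring, hq1]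
      have := ih w; push_cast at this; exact this
    | pred n ih =>
      intro w
      push_cast
      rw [show w + (-(n:ℂ)-1) = (w + -(n:ℂ)) - 1 from by ring, hq1']
      have := ih w; push_cast at this; exact this
  have hn : ∀ (n : ℤ) (w : ℂ), quot θ ψ (w + (n:ℂ)*τ) = quot θ ψ w := by
    intro n
    induction n using Int.induction_on with
    | zero => intro w; norm_num
    | succ k ih =>
      intro w
      push_cast
      rw [show w + ((k:ℂ)+1)*τ = (w + (k:ℂ)*τ) + τ from by ring, hqτ]
      have := ih w; push_cast at this; exact this
    | pred k ih =>
      intro w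
      push_cast
      rw [show w + (-(k:ℂ)-1)*τ = (w + -(k:ℂ)*τ) - τ from by ring, hqτ']
      have := ih w; push_cast at this; exact this
  intro m n w
  rw [show w + (m:ℂ) + (n:ℂ)*τ = (w + (m:ℂ)) + (n:ℂ)*τ from by ring, hn, hm]

lemma quot_bounded (hτ : 0 < τ.im) (hqd : Differentiable ℂ (quot θ ψ))
    (hper : ∀ (m n : ℤ) (w : ℂ), quot θ ψ (w + (m:ℂ) + (n:ℂ)*τ) = quot θ ψ w) :
    Bornology.IsBounded (Set.range (quot θ ψ)) := by
  set K := (fun p : ℝ × ℝ => ((p.1 : ℂ) + (p.2:ℂ)*τ)) ''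
    (Set.Icc (0:ℝ) 1 ×ˢ Set.Icc (0:ℝ) 1) with hKdef
  have hcontmap : Continuous (fun p : ℝ × ℝ => ((p.1 : ℂ) + (p.2:ℂ)*τ)) := by
    apply Continuous.add
    · exact Complex.continuous_ofReal.comp continuous_fst
    · exact ((Complex.continuous_ofReal.comp continuous_snd).mul continuous_const)
  have hK : IsCompact K := (isCompact_Icc.prod isCompact_Icc).image hcontmap
  have hτ0 : τ.im ≠ 0 := ne_of_gt hτ
  have hcover : ∀ z : ℂ, ∃ k ∈ K, quot θ ψ z = quot θ ψ k := by
    intro z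
    set y := z.im / τ.im with hy
    set x := z.re - y * τ.re with hx
    have hzeq : z = (x:ℂ) + (y:ℂ)*τ := by
      apply Complex.ext
      · simp [Complex.add_re, Complex.mul_re, hx]
      · simp [Complex.add_im, Complex.mul_im, hy]
        field_simp
    set a := Int.fract x with ha
    set b := Int.fract y with hb
    refine ⟨(a:ℂ) + (b:ℂ)*τ, ⟨(a, b), ⟨⟨Int.fract_nonneg x, (Int.fract_lt_one x).le⟩,
      ⟨Int.fract_nonneg y, (Int.fract_lt_one y).le⟩⟩, rfl⟩, ?_⟩
    have hdecomp : z = ((a:ℂ) + (b:ℂ)*τ) + ((⌊x⌋:ℤ):ℂ) + ((⌊y⌋:ℤ):ℂ)*τ := by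
      rw [hzeq]
      have hxa : (x:ℂ) = (a:ℂ) + ((⌊x⌋:ℤ):ℂ) := by
        rw [ha, Int.fract]
        push_cast
        ring
      have hyb : (y:ℂ) = (b:ℂ) + ((⌊y⌋:ℤ):ℂ) := by
        rw [hb, Int.fract]
        push_cast
        ring
      rw [hxa, hyb]
      ring
    rw [hdecomp, hper ⌊x⌋ ⌊y⌋]
  have himg : Set.range (quot θ ψ) ⊆ (quot θ ψ) '' K := by
    rintro w ⟨z, rfl⟩
    rcases hcover z with ⟨k, hk, heq⟩
    exact ⟨k, hk, heq.symm⟩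
  exact ((hK.image hqd.continuous).isBounded).subset himg

lemma solution_unique (hτ : 0 < τ.im)
    (hθd : Differentiable ℂ θ) (hθ1 : deriv θ 0 = 1)
    (hθz : ∀ z, θ z = 0 ↔ z ∈ lattice τ)
    (hθp1 : ∀ z, θ (z+1) = - θ z)
    (hθpτ : ∀ z, θ (z + τ) = - cexp (-(Real.pi:ℂ)*I*τ) * cexp (-2*(Real.pi:ℂ)*I*z) * θ z)
    (hψd : Differentiable ℂ ψ) (hψ1 : deriv ψ 0 = 1)
    (hψz : ∀ z, ψ z = 0 ↔ z ∈ lattice τ)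
    (hψp1 : ∀ z, ψ (z+1) = - ψ z)
    (hψpτ : ∀ z, ψ (z + τ) = - cexp (-(Real.pi:ℂ)*I*τ) * cexp (-2*(Real.pi:ℂ)*I*z) * ψ z) :
    ψ = θ := by
  have hqd := quot_diff hτ hθd hψd hθ1 hθz hψz hθp1 hθpτ
  have hper := quot_periodic hτ hθd hψd hθz hψz hθp1 hψp1 hθpτ hψpτ
  have hb := quot_bounded hτ hqd hper
  have hconst : ∀ z, quot θ ψ z = quot θ ψ 0 :=
    fun z => hqd.apply_eq_apply_of_bounded hb z 0
  have h00 : (0:ℂ) ∈ lattice τ := ⟨0, 0, by push_cast; ring⟩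
  have hθ00 : θ 0 = 0 := (hθz 0).2 h00
  have hq0 : quot θ ψ 0 = 1 := by
    simp only [quot, if_pos hθ00, hθ1, hψ1]
    norm_num
  funext z
  by_cases hz : θ z = 0
  · have : ψ z = 0 := (hψz z).2 ((hθz z).1 hz)
    rw [this, hz]
  · have := hconst z
    rw [hq0] at this
    simp only [quot, if_neg hz] at this
    exact (div_eq_one_iff_eq hz).1 this

end Uniqueness

end

end ThetaAux

open ThetaAux in
/-- **Existence and uniqueness of the basic theta function.**
Let `τ ∈ ℂ` with `Im τ > 0` and `Γ = ℤ + τℤ`.  There is a unique entire function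
`θ : ℂ → ℂ` such that `θ′(0) = 1`, the zero set of `θ` is exactly `Γ`,
`θ(z+1) = −θ(z)` and `θ(z+τ) = −e^{−iπτ} e^{−2iπz} θ(z)` for all `z`. -/
theorem exists_unique_theta (τ : ℂ) (hτ : 0 < τ.im) :
    ∃! θ : ℂ → ℂ,
      Differentiable ℂ θ ∧
      deriv θ 0 = 1 ∧
      (∀ z : ℂ, θ z = 0 ↔ z ∈ lattice τ) ∧
      (∀ z : ℂ, θ (z + 1) = - θ z) ∧
      (∀ z : ℂ, θ (z + τ) =
        - Complex.exp (-(Real.pi : ℂ) * Complex.I * τ) *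
          Complex.exp (-2 * (Real.pi : ℂ) * Complex.I * z) * θ z) := by
  have hzero : ∀ z : ℂ, theta τ z = 0 ↔ z ∈ lattice τ := by
    intro z
    rw [theta_eq_zero_iff hτ z]
    rfl
  have hp1 : ∀ z : ℂ, theta τ (z + 1) = - theta τ z := fun z => theta_add_one z
  have hpτ : ∀ z : ℂ, theta τ (z + τ)
      = - Complex.exp (-(Real.pi : ℂ) * Complex.I * τ) *
          Complex.exp (-2 * (Real.pi : ℂ) * Complex.I * z) * theta τ z :=
    fun z => theta_add_tau hτ z
  refine ⟨theta τ, ⟨diff_theta hτ, deriv_theta hτ, hzero, hp1, hpτ⟩, ?_⟩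
  rintro ψ ⟨h1, h2, h3, h4, h5⟩
  exact solution_unique hτ (diff_theta hτ) (deriv_theta hτ) hzero hp1 hpτ h1 h2 h3 h4 h5
end

section
/- Let λ ∈ ℂ ∖ Γ and i ∈ ℕ. Then θ(λ) ≠ 0, the function z ↦ z^{i+1} e_{i,λ}(z) extends holomorphically to a neighbourhood of 0, and its value at 0 is (−1)^i · i! · θ(λ). In particular e_{i,λ} has a pole of order exactly i+1 at 0. -/
/-!
Since `θ` has a simple zero at `0` with `θ'(0) = 1`, one can write `θ(λ + z) / θ(z) = F(z) / z`
near `0` with `F(z) = θ(λ + z) / dslope θ 0 z` analytic and `F(0) = θ(λ) ≠ 0`. Differentiating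
`G(z) / z ^ (n + 1)` gives `(z G'(z) - (n + 1) G(z)) / z ^ (n + 2)`, whose numerator takes the value
`-(n + 1) G(0)` at `0`; by induction the `i`-th derivative is `G_i(z) / z ^ (i + 1)` with
`G_i(0) = (-1) ^ i i! θ(λ) ≠ 0`.
-/

open Complex

noncomputable def eFun (θ : ℂ → ℂ) (lam : ℂ) (i : ℕ) : ℂ → ℂ :=
  iteratedDeriv i (fun z => θ (lam + z) / θ z)

open Filter Topology

section

variable {𝕜 : Type*} [NontriviallyNormedField 𝕜]

theorem AnalyticAt.dslope {E : Type*} [NormedAddCommGroup E] [NormedSpace 𝕜 E] {f : 𝕜 → E}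
    {c : 𝕜} (hf : AnalyticAt 𝕜 f c) : AnalyticAt 𝕜 (dslope f c) c := by
  obtain ⟨p, hp⟩ := hf
  exact hp.has_fpower_series_dslope_fslope.analyticAt

theorem div_eventuallyEq_div_sub_of_eq_zero {g h : 𝕜 → 𝕜} {c : 𝕜} (hc : h c = 0) :
    (fun z => g z / h z) =ᶠ[𝓝[≠] c] fun z => g z / dslope h c z / (z - c) := by
  filter_upwards [self_mem_nhdsWithin] with z hz
  rw [← sub_smul_dslope_of_zero hc z, smul_eq_mul, div_div, mul_comm]

theorem deriv_eventuallyEq_div_sub_pow [CompleteSpace 𝕜] {f G : 𝕜 → 𝕜} {c : 𝕜} {n : ℕ}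
    (hG : AnalyticAt 𝕜 G c)
    (hf : f =ᶠ[𝓝[≠] c] fun z => G z / (z - c) ^ (n + 1)) :
    deriv f =ᶠ[𝓝[≠] c] fun z => ((z - c) * deriv G z - (n + 1) * G z) / (z - c) ^ (n + 2) := by
  filter_upwards [hf.nhdsNE_deriv, nhdsWithin_le_nhds hG.eventually_analyticAt,
    self_mem_nhdsWithin] with z hfz hGz hz
  have hzc : z - c ≠ 0 := sub_ne_zero.mpr hz
  have hpow : HasDerivAt (fun w => (w - c) ^ (n + 1)) ((n + 1) * (z - c) ^ n) z := by
    simpa using ((hasDerivAt_id z).sub_const c).fun_pow (n + 1)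
  rw [hfz, (hGz.differentiableAt.hasDerivAt.fun_div hpow (pow_ne_zero _ hzc)).deriv]
  field_simp
  ring

theorem exists_iteratedDeriv_eventuallyEq_div_sub_pow [CompleteSpace 𝕜] {f F : 𝕜 → 𝕜} {c : 𝕜}
    (hF : AnalyticAt 𝕜 F c) (hf : f =ᶠ[𝓝[≠] c] fun z => F z / (z - c)) (i : ℕ) :
    ∃ G : 𝕜 → 𝕜, AnalyticAt 𝕜 G c ∧ G c = (-1) ^ i * i.factorial * F c ∧
      iteratedDeriv i f =ᶠ[𝓝[≠] c] fun z => G z / (z - c) ^ (i + 1) := by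
  induction i with
  | zero => exact ⟨F, hF, by simp, by simpa using hf⟩
  | succ n ih =>
    obtain ⟨G, hG, hGc, hfG⟩ := ih
    refine ⟨fun z => (z - c) * deriv G z - (n + 1) * G z,
      ((analyticAt_id.sub analyticAt_const).mul hG.deriv).sub (analyticAt_const.mul hG), ?_, ?_⟩
    · simp only [sub_self, zero_mul, zero_sub, hGc, Nat.factorial_succ]
      push_cast
      ring
    · rw [iteratedDeriv_succ]
      exact deriv_eventuallyEq_div_sub_pow hG hfG

end

theorem eFun_pole_at_zero_general (τ : ℂ) (θ : ℂ → ℂ)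
    (hθ_entire : Differentiable ℂ θ)
    (hθ_deriv : deriv θ 0 = 1)
    (hθ_zero : ∀ z : ℂ, θ z = 0 ↔ z ∈ lattice τ)
    (lam : ℂ) (hlam : lam ∉ lattice τ) (i : ℕ) :
    θ lam ≠ 0 ∧
    (∃ g : ℂ → ℂ, AnalyticAt ℂ g 0 ∧
      (∀ᶠ z in nhdsWithin (0 : ℂ) {(0 : ℂ)}ᶜ, g z = z ^ (i + 1) * eFun θ lam i z) ∧
      g 0 = (-1 : ℂ) ^ i * (i.factorial : ℂ) * θ lam) ∧
    (∀ hm : MeromorphicAt (eFun θ lam i) 0,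
      meromorphicOrderAt (eFun θ lam i) 0 = ((-(i + 1 : ℤ) : ℤ) : WithTop ℤ)) := by
  have hθlam : θ lam ≠ 0 := fun h => hlam ((hθ_zero lam).mp h)
  have hθ0 : θ 0 = 0 := (hθ_zero 0).mpr ⟨0, 0, by simp⟩
  have hslope : dslope θ 0 0 = 1 := by rw [dslope_same, hθ_deriv]
  have hF : AnalyticAt ℂ (fun z => θ (lam + z) / dslope θ 0 z) 0 :=
    ((hθ_entire.analyticAt _).comp (analyticAt_const.add analyticAt_id)).div
      (hθ_entire.analyticAt 0).dslope (by rw [hslope]; exact one_ne_zero)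
  obtain ⟨G, hG, hG0, hGe⟩ := exists_iteratedDeriv_eventuallyEq_div_sub_pow hF
    (div_eventuallyEq_div_sub_of_eq_zero hθ0) i
  simp only [hslope, add_zero, div_one, sub_zero] at hG0 hGe
  have hG0_ne : G 0 ≠ 0 := by
    rw [hG0]
    exact mul_ne_zero (mul_ne_zero (pow_ne_zero _ (by norm_num)) (mod_cast i.factorial_ne_zero))
      hθlam
  refine ⟨hθlam, ⟨G, hG, ?_, hG0⟩, fun hm => ?_⟩
  · filter_upwards [hGe, self_mem_nhdsWithin] with z hz hz0
    rw [eFun, hz, mul_div_cancel₀ _ (pow_ne_zero _ hz0)]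
  · refine (meromorphicOrderAt_eq_int_iff hm).mpr ⟨G, hG, hG0_ne, ?_⟩
    filter_upwards [hGe] with z hz
    rw [eFun, hz, sub_zero, smul_eq_mul, zpow_neg, ← inv_mul_eq_div]
    norm_cast

/-- **Behaviour of `e_{i,λ}` at `0`.**
For `λ ∉ Γ` and `i ∈ ℕ`: `θ(λ) ≠ 0`; the function `z ↦ z^{i+1} e_{i,λ}(z)` extends
holomorphically near `0` with value `(−1)^i i! θ(λ)` at `0`; in particular `e_{i,λ}`
has a pole of order exactly `i+1` at `0`. -/
theorem eFun_pole_at_zero (τ : ℂ) (hτ : 0 < τ.im) (θ : ℂ → ℂ)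
    (hθ_entire : Differentiable ℂ θ)
    (hθ_deriv : deriv θ 0 = 1)
    (hθ_zero : ∀ z : ℂ, θ z = 0 ↔ z ∈ lattice τ)
    (hθ_per1 : ∀ z : ℂ, θ (z + 1) = - θ z)
    (hθ_perτ : ∀ z : ℂ, θ (z + τ) =
      - Complex.exp (-(Real.pi : ℂ) * Complex.I * τ) *
        Complex.exp (-2 * (Real.pi : ℂ) * Complex.I * z) * θ z)
    (lam : ℂ) (hlam : lam ∉ lattice τ) (i : ℕ) :
    θ lam ≠ 0 ∧
    (∃ g : ℂ → ℂ, AnalyticAt ℂ g 0 ∧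
      (∀ᶠ z in nhdsWithin (0 : ℂ) {(0 : ℂ)}ᶜ, g z = z ^ (i + 1) * eFun θ lam i z) ∧
      g 0 = (-1 : ℂ) ^ i * (i.factorial : ℂ) * θ lam) ∧
    (∀ hm : MeromorphicAt (eFun θ lam i) 0,
      meromorphicOrderAt (eFun θ lam i) 0 = ((-(i + 1 : ℤ) : ℤ) : WithTop ℤ)) :=
  eFun_pole_at_zero_general τ θ hθ_entire hθ_deriv hθ_zero lam hlam i
end

section
/- Let λ ∈ ℂ ∖ Γ and i, j ∈ ℕ. Then res₀( (z^j / j!) · e_{i,λ}(z) ) = (−1)^i δ_{ij} θ(λ), where δ_{ij} is the Kronecker delta. (This is the precise form of the statement that (z^i/i!)_{i≥0} and (e_{i,λ})_{i≥0} are dual families for the residue pairing ⟨f,g⟩ = res₀(fg).) -/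
set_option maxHeartbeats 1000000


open Complex

/-- first coefficient of a power series summing to zero on a punctured disc vanishes -/
lemma head_zero_of_hasSum_zero {b : ℕ → ℂ} {ρ : ℝ} (hρ : 0 < ρ)
    (h : ∀ z : ℂ, z ≠ 0 → ‖z‖ < ρ → HasSum (fun n : ℕ => b n * z ^ n) 0) :
    b 0 = 0 := by
  obtain ⟨r, hr0, hrρ⟩ : ∃ r : ℝ, 0 < r ∧ r < ρ := ⟨ρ / 2, by positivity, by linarith⟩
  have hrz : (r : ℂ) ≠ 0 := by exact_mod_cast hr0.ne'
  have hrn : ‖(r : ℂ)‖ < ρ := by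
    rw [Complex.norm_real, Real.norm_eq_abs, abs_of_pos hr0]; exact hrρ
  have hS : Summable fun n : ℕ => ‖b n‖ * r ^ n := by
    have h1 := (h (r : ℂ) hrz hrn).summable
    have h2 := (summable_norm_iff (E := ℂ)).mpr h1
    refine h2.congr fun n => ?_
    rw [norm_mul, norm_pow, Complex.norm_real, Real.norm_eq_abs, abs_of_pos hr0]
  have hS1 : Summable fun n : ℕ => ‖b (n + 1)‖ * r ^ n := by
    have h1 : Summable fun n : ℕ => ‖b (n + 1)‖ * r ^ (n + 1) :=
      (summable_nat_add_iff 1).mpr hS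
    have h2 := h1.mul_left r⁻¹
    refine h2.congr fun n => ?_
    rw [pow_succ]
    field_simp
  set C : ℝ := ∑' n : ℕ, ‖b (n + 1)‖ * r ^ n with hC
  have hC0 : 0 ≤ C := tsum_nonneg fun n => by positivity
  have key : ∀ t : ℝ, 0 < t → t < r → ‖b 0‖ ≤ t * C := by
    intro t ht htr
    have htz : (t : ℂ) ≠ 0 := by exact_mod_cast ht.ne'
    have htn : ‖(t : ℂ)‖ < ρ := by
      rw [Complex.norm_real, Real.norm_eq_abs, abs_of_pos ht]; linarith
    have hsum := h (t : ℂ) htz htn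
    have hshift : HasSum (fun n : ℕ => b (n + 1) * (t : ℂ) ^ (n + 1)) (-(b 0)) := by
      refine (hasSum_nat_add_iff (f := fun n : ℕ => b n * (t : ℂ) ^ n) 1).mpr ?_
      simpa using hsum
    have hb0 : ‖b 0‖ = ‖∑' n : ℕ, b (n + 1) * (t : ℂ) ^ (n + 1)‖ := by
      rw [hshift.tsum_eq, norm_neg]
    have hterm : ∀ n : ℕ, ‖b (n + 1) * (t : ℂ) ^ (n + 1)‖ ≤ t * (‖b (n + 1)‖ * r ^ n) := by
      intro n
      rw [norm_mul, norm_pow, Complex.norm_real, Real.norm_eq_abs, abs_of_pos ht]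
      have h1 : t ^ (n + 1) ≤ t * r ^ n := by
        rw [pow_succ']
        exact mul_le_mul_of_nonneg_left (pow_le_pow_left₀ ht.le htr.le n) ht.le
      calc ‖b (n + 1)‖ * t ^ (n + 1) ≤ ‖b (n + 1)‖ * (t * r ^ n) := by gcongr
        _ = t * (‖b (n + 1)‖ * r ^ n) := by ring
    have hsn : Summable fun n : ℕ => ‖b (n + 1) * (t : ℂ) ^ (n + 1)‖ :=
      Summable.of_nonneg_of_le (fun n => norm_nonneg _) hterm (hS1.mul_left t)
    calc ‖b 0‖ ≤ ∑' n : ℕ, ‖b (n + 1) * (t : ℂ) ^ (n + 1)‖ := by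
          rw [hb0]; exact norm_tsum_le_tsum_norm hsn
      _ ≤ ∑' n : ℕ, t * (‖b (n + 1)‖ * r ^ n) := Summable.tsum_le_tsum hterm hsn (hS1.mul_left t)
      _ = t * C := by rw [tsum_mul_left]
  by_contra hb
  have hb0 : 0 < ‖b 0‖ := norm_pos_iff.mpr hb
  set t : ℝ := min (r / 2) (‖b 0‖ / (2 * (C + 1))) with htdef
  have ht0 : 0 < t := by
    apply lt_min (by positivity) (by positivity)
  have htr : t < r := lt_of_le_of_lt (min_le_left _ _) (by linarith)
  have h1 := key t ht0 htr
  have h2 : t ≤ ‖b 0‖ / (2 * (C + 1)) := min_le_right _ _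
  have h3 : t * C ≤ (‖b 0‖ / (2 * (C + 1))) * C := by gcongr
  have h4 : (‖b 0‖ / (2 * (C + 1))) * C < ‖b 0‖ := by
    rw [div_mul_eq_mul_div, div_lt_iff₀ (by positivity)]
    nlinarith
  linarith

lemma coeff_zero_of_hasSum_zero {ρ : ℝ} (hρ : 0 < ρ) :
    ∀ (n : ℕ) (b : ℕ → ℂ),
      (∀ z : ℂ, z ≠ 0 → ‖z‖ < ρ → HasSum (fun n : ℕ => b n * z ^ n) 0) → b n = 0 := by
  intro n
  induction n with
  | zero => exact fun b h => head_zero_of_hasSum_zero hρ h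
  | succ n ih =>
    intro b h
    have hb0 : b 0 = 0 := head_zero_of_hasSum_zero hρ h
    have h' : ∀ z : ℂ, z ≠ 0 → ‖z‖ < ρ →
        HasSum (fun k : ℕ => b (k + 1) * z ^ k) 0 := by
      intro z hz hzρ
      have hshift : HasSum (fun k : ℕ => b (k + 1) * z ^ (k + 1)) 0 := by
        refine (hasSum_nat_add_iff (f := fun k : ℕ => b k * z ^ k) 1).mpr ?_
        simpa [hb0] using h z hz hzρ
      have h2 := hshift.mul_left z⁻¹
      rw [mul_zero] at h2
      have heq : (fun k : ℕ => z⁻¹ * (b (k + 1) * z ^ (k + 1)))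
          = fun k : ℕ => b (k + 1) * z ^ k := by
        funext k
        rw [pow_succ]
        field_simp
      rwa [heq] at h2
    exact ih (fun k => b (k + 1)) h'

lemma int_coeff_zero_of_hasSum_zero {b : ℤ → ℂ} {N : ℕ} {ρ : ℝ} (hρ : 0 < ρ)
    (hlow : ∀ n : ℤ, n < -(N : ℤ) → b n = 0)
    (h : ∀ z : ℂ, z ≠ 0 → ‖z‖ < ρ → HasSum (fun n : ℤ => b n * z ^ n) 0) :
    ∀ n : ℤ, b n = 0 := by
  have hd : ∀ z : ℂ, z ≠ 0 → ‖z‖ < ρ →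
      HasSum (fun k : ℕ => b ((k : ℤ) - N) * z ^ k) 0 := by
    intro z hz hzρ
    have hinj : Function.Injective (fun k : ℕ => (k : ℤ) - N) := by
      intro a b hab
      simpa using hab
    have hzero : ∀ m : ℤ, m ∉ Set.range (fun k : ℕ => (k : ℤ) - N) →
        b m * z ^ m = 0 := by
      intro m hm
      have : m < -(N : ℤ) := by
        by_contra hcon
        refine hm ⟨(m + N).toNat, ?_⟩
        simp only
        omega
      rw [hlow m this, zero_mul]
    have h1 : HasSum (fun k : ℕ => b ((k : ℤ) - N) * z ^ ((k : ℤ) - N)) 0 :=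
      (hinj.hasSum_iff hzero).mpr (h z hz hzρ)
    have h2 := h1.mul_left (z ^ (N : ℤ))
    rw [mul_zero] at h2
    have heq : (fun k : ℕ => z ^ (N : ℤ) * (b ((k : ℤ) - N) * z ^ ((k : ℤ) - N)))
        = fun k : ℕ => b ((k : ℤ) - N) * z ^ k := by
      funext k
      have : z ^ (N : ℤ) * z ^ ((k : ℤ) - N) = z ^ k := by
        rw [← zpow_add₀ hz, ← zpow_natCast z k]
        ring_nf
      rw [mul_comm (z ^ (N : ℤ)), mul_assoc, mul_comm (z ^ ((k:ℤ) - N)), this]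
    rwa [heq] at h2
  intro n
  rcases lt_or_ge n (-(N : ℤ)) with hn | hn
  · exact hlow n hn
  · have hn' : n = ((n + N).toNat : ℤ) - N := by omega
    rw [hn']
    exact coeff_zero_of_hasSum_zero hρ (n + N).toNat (fun k => b ((k : ℤ) - N)) hd

lemma analyticOnNhd_iteratedDeriv {v : ℂ → ℂ} {s : Set ℂ}
    (hvA : AnalyticOnNhd ℂ v s) (k : ℕ) :
    AnalyticOnNhd ℂ (iteratedDeriv k v) s := by
  induction k with
  | zero => simpa [iteratedDeriv_zero] using hvA
  | succ k ih => rw [iteratedDeriv_succ]; exact ih.deriv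

lemma iteratedDeriv_singular_part (f₀ v : ℂ → ℂ) (c : ℂ) (ε ε₁ : ℝ) (hεε₁ : ε ≤ ε₁)
    (hvA : AnalyticOnNhd ℂ v (Metric.ball 0 ε₁))
    (hid : ∀ z : ℂ, z ≠ 0 → ‖z‖ < ε → f₀ z = c * z⁻¹ + v z) :
    ∀ (k : ℕ) (z : ℂ), z ≠ 0 → ‖z‖ < ε →
      iteratedDeriv k f₀ z
        = c * ((-1 : ℂ) ^ k * (k.factorial : ℂ) * z ^ (-(k : ℤ) - 1))
          + iteratedDeriv k v z := by
  have hvk := analyticOnNhd_iteratedDeriv hvA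
  intro k
  induction k with
  | zero =>
    intro z hz hzε
    simp only [iteratedDeriv_zero, pow_zero, Nat.factorial_zero, Nat.cast_one, one_mul]
    rw [hid z hz hzε]
    norm_num
  | succ k ih =>
    intro z hz hzε
    have hball : z ∈ Metric.ball (0 : ℂ) ε₁ := by
      rw [Metric.mem_ball, dist_zero_right]; linarith
    have hSopen : IsOpen (Metric.ball (0 : ℂ) ε ∩ {(0 : ℂ)}ᶜ) :=
      Metric.isOpen_ball.inter isOpen_compl_singleton
    have hmem : z ∈ Metric.ball (0 : ℂ) ε ∩ {(0 : ℂ)}ᶜ :=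
      ⟨by rw [Metric.mem_ball, dist_zero_right]; exact hzε, hz⟩
    have hEq : (iteratedDeriv k f₀) =ᶠ[nhds z]
        fun y => c * ((-1 : ℂ) ^ k * (k.factorial : ℂ) * y ^ (-(k : ℤ) - 1))
          + iteratedDeriv k v y := by
      filter_upwards [hSopen.mem_nhds hmem] with y hy
      have h1 := hy.1
      rw [Metric.mem_ball, dist_zero_right] at h1
      exact ih y hy.2 h1
    rw [iteratedDeriv_succ, hEq.deriv_eq]
    have hd1 : DifferentiableAt ℂ
        (fun y : ℂ => c * ((-1 : ℂ) ^ k * (k.factorial : ℂ) * y ^ (-(k : ℤ) - 1))) z := by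
      exact ((differentiableAt_zpow.mpr (Or.inl hz)).const_mul _).const_mul c
    have hd2 : DifferentiableAt ℂ (iteratedDeriv k v) z :=
      (hvk k z hball).differentiableAt
    rw [deriv_fun_add hd1 hd2, ← iteratedDeriv_succ]
    congr 1
    rw [deriv_const_mul _ ((differentiableAt_zpow.mpr (Or.inl hz)).const_mul _),
      deriv_const_mul _ (differentiableAt_zpow.mpr (Or.inl hz)), deriv_zpow]
    have hexp : (-(k:ℤ) - 1 - 1) = (-(((k+1) : ℕ) : ℤ) - 1) := by push_cast; ring
    rw [hexp]
    have hcast : ((-(k:ℤ) - 1 : ℤ) : ℂ) = -(k:ℂ) - 1 := by push_cast; ring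
    rw [hcast, Nat.factorial_succ]
    push_cast
    ring

/-- `F ∈ ℂ((z))` is the Laurent expansion at `0` of `f : ℂ → ℂ`:
the series `Σ F_n z^n` converges to `f z` on a punctured disc around `0`. -/
def IsLaurentExpansionAt (F : LaurentSeries ℂ) (f : ℂ → ℂ) : Prop :=
  ∃ ρ : ℝ, 0 < ρ ∧ ∀ z : ℂ, z ≠ 0 → ‖z‖ < ρ →
    HasSum (fun n : ℤ => F.coeff n * z ^ n) (f z)

lemma lattice_discrete (τ : ℂ) (hτ : 0 < τ.im) (z : ℂ) (hz : z ≠ 0)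
    (h1 : ‖z‖ < 1) (h2 : ‖z‖ < τ.im) (hl : z ∈ lattice τ) : False := by
  obtain ⟨m, n, rfl⟩ := hl
  have him : ((m : ℂ) + (n : ℂ) * τ).im = (n : ℝ) * τ.im := by
    simp
  have hre : ((m : ℂ) + (n : ℂ) * τ).re = (m : ℝ) + (n : ℝ) * τ.re := by
    simp
  rcases eq_or_ne n 0 with hn | hn
  · subst hn
    simp only [Int.cast_zero, zero_mul, add_zero] at hz h1
    have hm : m ≠ 0 := by exact_mod_cast hz
    have h1m : (1 : ℝ) ≤ |(m : ℝ)| := by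
      rw [← Int.cast_abs]
      exact_mod_cast Int.one_le_abs (by omega)
    rw [Complex.norm_intCast] at h1
    linarith
  · have h1n : (1 : ℝ) ≤ |(n : ℝ)| := by
      rw [← Int.cast_abs]
      exact_mod_cast Int.one_le_abs hn
    have habs := Complex.abs_im_le_norm ((m : ℂ) + (n : ℂ) * τ)
    rw [him] at habs
    have : τ.im ≤ |(n : ℝ) * τ.im| := by
      rw [abs_mul, abs_of_pos hτ]
      nlinarith
    linarith

/-- **Duality of `(z^i/i!)` and `(e_{i,λ})` for the residue pairing.**
For `λ ∉ Γ` and `i, j ∈ ℕ`, `res₀( (z^j/j!) e_{i,λ}(z) ) = (−1)^i δ_{ij} θ(λ)`,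
the residue being the coefficient of `z^{−1}` in the Laurent expansion at `0`. -/
theorem residue_pairing_dual_bases (τ : ℂ) (hτ : 0 < τ.im) (θ : ℂ → ℂ)
    (hθ_entire : Differentiable ℂ θ)
    (hθ_deriv : deriv θ 0 = 1)
    (hθ_zero : ∀ z : ℂ, θ z = 0 ↔ z ∈ lattice τ)
    (hθ_per1 : ∀ z : ℂ, θ (z + 1) = - θ z)
    (hθ_perτ : ∀ z : ℂ, θ (z + τ) =
      - Complex.exp (-(Real.pi : ℂ) * Complex.I * τ) *
        Complex.exp (-2 * (Real.pi : ℂ) * Complex.I * z) * θ z)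
    (lam : ℂ) (hlam : lam ∉ lattice τ) (i j : ℕ) :
    ∀ F : LaurentSeries ℂ,
      IsLaurentExpansionAt F (fun z => z ^ j / (j.factorial : ℂ) * eFun θ lam i z) →
      F.coeff (-1) = if i = j then (-1 : ℂ) ^ i * θ lam else 0 := by
  intro F hF
  -- basic zero facts
  have hθ0 : θ 0 = 0 := (hθ_zero 0).mpr ⟨0, 0, by simp⟩
  set ε₀ : ℝ := min 1 τ.im with hε₀def
  have hε₀ : 0 < ε₀ := lt_min one_pos hτ
  have hne : ∀ z : ℂ, z ≠ 0 → ‖z‖ < ε₀ → θ z ≠ 0 := by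
    intro z hz hzε h0
    exact lattice_discrete τ hτ z hz (lt_of_lt_of_le hzε (min_le_left _ _))
      (lt_of_lt_of_le hzε (min_le_right _ _)) ((hθ_zero z).mp h0)
  -- the decomposition θ(λ+z)/θ(z) = θ(λ)/z + v(z)
  obtain ⟨v, hva, hid⟩ : ∃ v : ℂ → ℂ, AnalyticAt ℂ v 0 ∧
      ∀ z : ℂ, z ≠ 0 → ‖z‖ < ε₀ → θ (lam + z) / θ z = θ lam * z⁻¹ + v z := by
    set w : ℂ → ℂ := dslope θ 0 with hw
    have hw0 : w 0 = 1 := by rw [hw, dslope_same]; exact hθ_deriv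
    have hwa : AnalyticAt ℂ w 0 := by
      obtain ⟨p, hp⟩ := hθ_entire.analyticAt 0
      exact ⟨p.fslope, hp.has_fpower_series_dslope_fslope⟩
    have hwz : ∀ z : ℂ, z ≠ 0 → w z = θ z / z := by
      intro z hz
      rw [hw, dslope_of_ne θ hz, slope_def_field, hθ0]
      simp [div_eq_mul_inv]
    set u : ℂ → ℂ := fun z => θ (lam + z) / w z with hu
    have hua : AnalyticAt ℂ u 0 := by
      have h1 : AnalyticAt ℂ (fun z => θ (lam + z)) 0 :=
        (hθ_entire.comp ((differentiable_const lam).add differentiable_id)).analyticAt 0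
      exact h1.div hwa (by rw [hw0]; exact one_ne_zero)
    have hu0 : u 0 = θ lam := by rw [hu]; simp [hw0]
    set v : ℂ → ℂ := dslope u 0 with hv
    have hva : AnalyticAt ℂ v 0 := by
      obtain ⟨p, hp⟩ := hua
      exact ⟨p.fslope, hp.has_fpower_series_dslope_fslope⟩
    refine ⟨v, hva, fun z hz hzε => ?_⟩
    have hθz : θ z ≠ 0 := hne z hz hzε
    have hwzne : w z ≠ 0 := by rw [hwz z hz]; exact div_ne_zero hθz hz
    have hvz : v z = (u z - θ lam) / z := by
      rw [hv, dslope_of_ne u hz, slope_def_field, hu0]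
      simp [div_eq_mul_inv]
    rw [hvz, hu]
    simp only
    rw [hwz z hz]
    field_simp
    ring
  -- a ball on which v is analytic
  have hvev := hva.eventually_analyticAt
  rw [Metric.eventually_nhds_iff] at hvev
  obtain ⟨ε₁, hε₁, hvball⟩ := hvev
  have hvA : AnalyticOnNhd ℂ v (Metric.ball 0 ε₁) := by
    intro y hy
    rw [Metric.mem_ball] at hy
    exact hvball hy
  set ε : ℝ := min ε₀ ε₁ with hεdef
  have hε : 0 < ε := lt_min hε₀ hε₁
  have key := iteratedDeriv_singular_part (fun z => θ (lam + z) / θ z) v (θ lam)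
    ε ε₁ (min_le_right _ _) hvA
    (fun z hz hzε => hid z hz (lt_of_lt_of_le hzε (min_le_left _ _)))
  -- the analytic part and its power series
  set A : ℂ → ℂ := fun z => z ^ j / (j.factorial : ℂ) * iteratedDeriv i v z with hA
  have hj0 : (j.factorial : ℂ) ≠ 0 := Nat.cast_ne_zero.mpr (Nat.factorial_ne_zero j)
  have hi0 : (i.factorial : ℂ) ≠ 0 := Nat.cast_ne_zero.mpr (Nat.factorial_ne_zero i)
  have hAa : AnalyticAt ℂ A 0 := by
    refine AnalyticAt.mul ?_ ?_
    · exact (analyticAt_id.pow j).div analyticAt_const hj0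
    · exact analyticOnNhd_iteratedDeriv hvA i 0 (by
        rw [Metric.mem_ball, dist_zero_right, norm_zero]; exact hε₁)
  obtain ⟨q, hq⟩ := hAa
  rw [hasFPowerSeriesAt_iff] at hq
  rw [Metric.eventually_nhds_iff] at hq
  obtain ⟨ε₂, hε₂, hqball⟩ := hq
  -- the explicit Laurent coefficients
  set m : ℤ := (j : ℤ) - i - 1 with hm
  set c₀ : ℂ := θ lam * ((-1 : ℂ) ^ i * (i.factorial : ℂ)) / (j.factorial : ℂ) with hc₀
  set cf : ℤ → ℂ := fun n =>
    (if 0 ≤ n then q.coeff n.toNat else 0) + (if n = m then c₀ else 0) with hcf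
  set ρ' : ℝ := min ε ε₂ with hρ'def
  have hρ' : 0 < ρ' := lt_min hε hε₂
  -- the explicit expansion converges to the target function
  have hg : ∀ z : ℂ, z ≠ 0 → ‖z‖ < ρ' →
      HasSum (fun n : ℤ => cf n * z ^ n)
        (z ^ j / (j.factorial : ℂ) * eFun θ lam i z) := by
    intro z hz hzρ
    have hzε : ‖z‖ < ε := lt_of_lt_of_le hzρ (min_le_left _ _)
    have hzε₂ : ‖z‖ < ε₂ := lt_of_lt_of_le hzρ (min_le_right _ _)
    have hAz : HasSum (fun n : ℕ => z ^ n • q.coeff n) (A z) := by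
      have := hqball (y := z) (by rw [dist_zero_right]; exact hzε₂)
      simpa using this
    -- sum of the regular part
    have h1 : HasSum (fun n : ℤ => (if 0 ≤ n then q.coeff n.toNat else 0) * z ^ n) (A z) := by
      have hinj : Function.Injective (fun k : ℕ => (k : ℤ)) := by
        intro a b hab
        simpa using hab
      have hzero : ∀ n : ℤ, n ∉ Set.range (fun k : ℕ => (k : ℤ)) →
          (if 0 ≤ n then q.coeff n.toNat else 0) * z ^ n = 0 := by
        intro n hn
        have : ¬ 0 ≤ n := by
          intro h
          exact hn ⟨n.toNat, by simp; omega⟩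
        rw [if_neg this, zero_mul]
      refine (hinj.hasSum_iff hzero).mp ?_
      have heq : ((fun n : ℤ => (if 0 ≤ n then q.coeff n.toNat else 0) * z ^ n)
          ∘ (fun k : ℕ => (k : ℤ))) = fun k : ℕ => z ^ k • q.coeff k := by
        funext k
        simp [zpow_natCast, smul_eq_mul, mul_comm]
      rw [heq]
      exact hAz
    -- sum of the singular part
    have h2 : HasSum (fun n : ℤ => (if n = m then c₀ else 0) * z ^ n) (c₀ * z ^ m) := by
      have heq : (fun n : ℤ => (if n = m then c₀ else 0) * z ^ n)
          = fun n : ℤ => if n = m then c₀ * z ^ m else 0 := by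
        funext n
        by_cases hn : n = m
        · subst hn; simp
        · simp [hn]
      rw [heq]
      exact hasSum_ite_eq m (c₀ * z ^ m)
    have h3 := h1.add h2
    have heq : (fun n : ℤ =>
        (if 0 ≤ n then q.coeff n.toNat else 0) * z ^ n + (if n = m then c₀ else 0) * z ^ n)
        = fun n : ℤ => cf n * z ^ n := by
      funext n
      rw [hcf]
      ring
    rw [heq] at h3
    -- identify the value
    have hval : A z + c₀ * z ^ m = z ^ j / (j.factorial : ℂ) * eFun θ lam i z := by
      have hkey := key i z hz hzε
      rw [eFun, hkey]
      have hzp : (z : ℂ) ^ (j : ℕ) * z ^ (-(i : ℤ) - 1) = z ^ m := by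
        rw [← zpow_natCast z j, ← zpow_add₀ hz]
        congr 1
        rw [hm]
        ring
      rw [hA, hc₀]
      simp only
      rw [← hzp]
      field_simp
      ring
    rw [← hval]
    exact h3
  -- lower bound on the support of F
  obtain ⟨N₀, hN₀⟩ : ∃ N : ℕ, ∀ n : ℤ, n < -(N : ℤ) → F.coeff n = 0 := by
    by_cases hsupp : F.support.Nonempty
    · refine ⟨(F.isWF_support.min hsupp).natAbs, fun n hn => ?_⟩
      by_contra hcoeff
      have hmem : n ∈ F.support := hcoeff
      have := F.isWF_support.not_lt_min hsupp hmem
      omega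
    · refine ⟨0, fun n _ => ?_⟩
      by_contra hcoeff
      exact hsupp ⟨n, hcoeff⟩
  obtain ⟨ρ, hρ, hFs⟩ := hF
  set ρ'' : ℝ := min ρ ρ' with hρ''def
  have hρ''pos : 0 < ρ'' := lt_min hρ hρ'
  -- the difference of coefficients
  set b : ℤ → ℂ := fun n => F.coeff n - cf n with hb
  set N : ℕ := max N₀ (i + 2) with hN
  have hlow : ∀ n : ℤ, n < -(N : ℤ) → b n = 0 := by
    intro n hn
    have h1 : F.coeff n = 0 := hN₀ n (by omega)
    have h2 : cf n = 0 := by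
      rw [hcf]
      simp only
      rw [if_neg (by omega), if_neg (by rw [hm]; omega)]
      simp
    rw [hb]
    simp [h1, h2]
  have hzero : ∀ z : ℂ, z ≠ 0 → ‖z‖ < ρ'' → HasSum (fun n : ℤ => b n * z ^ n) 0 := by
    intro z hz hzρ
    have hF1 := hFs z hz (lt_of_lt_of_le hzρ (min_le_left _ _))
    have hg1 := hg z hz (lt_of_lt_of_le hzρ (min_le_right _ _))
    have h3 := hF1.sub hg1
    rw [sub_self] at h3
    have heq : (fun n : ℤ => F.coeff n * z ^ n - cf n * z ^ n)
        = fun n : ℤ => b n * z ^ n := by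
      funext n
      rw [hb]
      ring
    rwa [heq] at h3
  have hball := int_coeff_zero_of_hasSum_zero (N := N) hρ''pos hlow hzero
  have hfinal : F.coeff (-1) = cf (-1) := by
    have := hball (-1)
    rw [hb] at this
    simp only at this
    linear_combination this
  rw [hfinal, hcf]
  simp only
  rw [if_neg (by omega)]
  by_cases hij : i = j
  · subst hij
    rw [if_pos (by rw [hm]; ring), if_pos rfl, hc₀]
    field_simp
    ring
  · rw [if_neg (by rw [hm]; omega), if_neg hij]
    norm_num
end

section
/- Let m ∈ ℤ. Denote by ℒ(f) ∈ ℂ((z)) the Laurent expansion at 0 of a function f meromorphic at 0. Then ℂ((z)) is the internal direct sum of the ℂ-subspace ℂ[[z]] and the ℂ-linear span of the Laurent expansions ℒ( (θ′/θ)^{(j)}(z) · e^{−2iπ m z} ) for j ∈ ℕ, where (θ′/θ)^{(j)} denotes the j-th derivative of θ′/θ. -/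
open Complex

/-- `ℂ[[z]]` viewed as the subspace of `ℂ((z))` of series with no negative
coefficients. -/
noncomputable def powerSeriesSubspace : Submodule ℂ (LaurentSeries ℂ) where
  carrier := {F : LaurentSeries ℂ | ∀ n : ℤ, n < 0 → F.coeff n = 0}
  add_mem' := by
    intro a b ha hb n hn
    simp only [HahnSeries.coeff_add, ha n hn, hb n hn, add_zero]
  zero_mem' := by
    intro n hn
    simp
  smul_mem' := by
    intro c F hF n hn
    simp only [HahnSeries.coeff_smul, hF n hn, smul_zero]

/-!
Since `θ` has a simple zero at `0`, `θ = z u` with `u` analytic and `u 0 ≠ 0`, so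
`θ′/θ = 1/z + u′/u`. Hence `z^{j+1} (θ′/θ)^{(j)}(z) e^{−2iπmz} → (−1)^j j! ≠ 0`, i.e. the
`j`-th Laurent series has order exactly `−(j+1)`. Such a family is triangular with respect to
`z^{−1}, z^{−2}, …` modulo `ℂ[[z]]`: the principal part of any Laurent series is cancelled by
subtracting suitable multiples of the `F j` from the most negative degree upwards, and a
nontrivial combination keeps the pole of its largest index.
-/

open Topology Filter

theorem tendsto_nhdsNE_of_hasSum_pow {𝕜 : Type*} [NontriviallyNormedField 𝕜]
    [CompleteSpace 𝕜] {a : ℕ → 𝕜} {g : 𝕜 → 𝕜} {ρ : ℝ} (hρ : 0 < ρ)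
    (hg : ∀ z : 𝕜, z ≠ 0 → ‖z‖ < ρ → HasSum (fun n => a n * z ^ n) (g z)) :
    Tendsto g (𝓝[≠] 0) (𝓝 (a 0)) := by
  obtain ⟨z₀, hz₀, hz₀ρ⟩ := NormedField.exists_norm_lt 𝕜 hρ
  set p := FormalMultilinearSeries.ofScalars 𝕜 a
  have hp : ∀ z, (fun n => p n fun _ => z) = fun n => a n * z ^ n := fun z =>
    FormalMultilinearSeries.ofScalars_apply_eq' a z
  have hradius : (‖z₀‖₊ : ENNReal) ≤ p.radius := by
    refine p.le_radius_of_tendsto (l := 0) ?_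
    simp only [p, FormalMultilinearSeries.ofScalars_norm, coe_nnnorm]
    simpa using (hg z₀ (norm_pos_iff.1 hz₀) hz₀ρ).summable.tendsto_atTop_zero.norm
  have hpos : 0 < p.radius := lt_of_lt_of_le (by simpa using hz₀) hradius
  have hsum_eq : p.sum =ᶠ[𝓝[≠] 0] g := by
    have hball : Metric.eball (0 : 𝕜) (‖z₀‖₊) ∈ 𝓝 0 :=
      Metric.eball_mem_nhds 0 (by simpa using hz₀)
    filter_upwards [self_mem_nhdsWithin, mem_nhdsWithin_of_mem_nhds hball] with z hz hzball
    have hzρ : ‖z‖ < ρ := by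
      simp only [Metric.mem_eball, edist_zero_right, enorm_eq_nnnorm,
        ENNReal.coe_lt_coe] at hzball
      exact lt_trans (by exact_mod_cast hzball) hz₀ρ
    refine HasSum.unique ?_ (hg z hz hzρ)
    rw [← hp]
    exact p.hasSum (Metric.eball_subset_eball hradius hzball)
  have hsum0 : p.sum 0 = a 0 := by
    change FormalMultilinearSeries.ofScalarsSum a 0 = a 0
    simp
  rw [← hsum0]
  exact ((p.hasFPowerSeriesOnBall hpos).analyticAt.continuousAt.tendsto.mono_left
    nhdsWithin_le_nhds).congr' hsum_eq

theorem IsLaurentExpansionAt.tendsto_zpow_mul {F : LaurentSeries ℂ} {f : ℂ → ℂ}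
    (hf : IsLaurentExpansionAt F f) {d : ℤ} (hd : ∀ n < d, F.coeff n = 0) :
    Tendsto (fun z => z ^ (-d) * f z) (𝓝[≠] 0) (𝓝 (F.coeff d)) := by
  obtain ⟨ρ, hρ, hsum⟩ := hf
  have hshift_nat : ∀ z : ℂ, z ≠ 0 → ‖z‖ < ρ →
      HasSum (fun k : ℕ => F.coeff (d + k) * z ^ k) (z ^ (-d) * f z) := by
    intro z hz hzρ
    have hshift : HasSum (fun k : ℤ => F.coeff (d + k) * z ^ k) (z ^ (-d) * f z) := by
      refine ((Equiv.addLeft d).hasSum_iff.2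
        ((hsum z hz hzρ).mul_left (z ^ (-d)))).congr_fun fun k => ?_
      simp only [Function.comp_apply, Equiv.coe_addLeft, zpow_add₀ hz, zpow_neg]
      field_simp
    rw [← Nat.cast_injective.hasSum_iff fun k hk => ?_] at hshift
    · exact hshift
    · have hk : k < 0 := by
        contrapose! hk
        exact ⟨k.toNat, Int.toNat_of_nonneg hk⟩
      simp [hd _ (by omega : d + k < d)]
  simpa using tendsto_nhdsNE_of_hasSum_pow hρ hshift_nat

theorem tendsto_zpow_mul_nhdsNE_zero_of_lt {𝕜 : Type*} [NormedField 𝕜] {f : 𝕜 → 𝕜}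
    {a b : ℤ} (hab : a < b) {A : 𝕜} (h : Tendsto (fun z => z ^ a * f z) (𝓝[≠] 0) (𝓝 A)) :
    Tendsto (fun z => z ^ b * f z) (𝓝[≠] 0) (𝓝 0) := by
  have hpow : Tendsto (fun z : 𝕜 => z ^ (b - a)) (𝓝[≠] 0) (𝓝 0) := by
    have := (continuousAt_zpow₀ (0 : 𝕜) (b - a) (Or.inr (by omega))).tendsto
    rw [zero_zpow _ (by omega)] at this
    exact this.mono_left nhdsWithin_le_nhds
  refine (zero_mul A ▸ hpow.mul h).congr' ?_
  filter_upwards [self_mem_nhdsWithin] with z hz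
  rw [← mul_assoc, ← zpow_add₀ hz, sub_add_cancel]

theorem eq_of_tendsto_zpow_mul {𝕜 : Type*} [NontriviallyNormedField 𝕜] {f : 𝕜 → 𝕜}
    {a b : ℤ} {A B : 𝕜} (hA : A ≠ 0) (hB : B ≠ 0)
    (ha : Tendsto (fun z => z ^ a * f z) (𝓝[≠] 0) (𝓝 A))
    (hb : Tendsto (fun z => z ^ b * f z) (𝓝[≠] 0) (𝓝 B)) : a = b := by
  rcases lt_trichotomy a b with hab | hab | hab
  · exact absurd (tendsto_nhds_unique hb (tendsto_zpow_mul_nhdsNE_zero_of_lt hab ha)) hB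
  · exact hab
  · exact absurd (tendsto_nhds_unique ha (tendsto_zpow_mul_nhdsNE_zero_of_lt hab hb)) hA

theorem IsLaurentExpansionAt.order_eq {F : LaurentSeries ℂ} {f : ℂ → ℂ}
    (hf : IsLaurentExpansionAt F f) {k : ℤ} {L : ℂ} (hL : L ≠ 0)
    (h : Tendsto (fun z => z ^ k * f z) (𝓝[≠] 0) (𝓝 L)) : F.order = -k := by
  have hlow : ∀ n < F.order, F.coeff n = 0 := fun n => HahnSeries.coeff_eq_zero_of_lt_order
  by_cases hF : F = 0
  · subst hF
    have h0 := hf.tendsto_zpow_mul (d := -k) (by simp)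
    rw [neg_neg] at h0
    exact absurd (tendsto_nhds_unique h h0) (by simpa using hL)
  · have := eq_of_tendsto_zpow_mul (HahnSeries.coeff_order_eq_zero.not.2 hF) hL
      (hf.tendsto_zpow_mul hlow) h
    omega

theorem Filter.EventuallyEq.iteratedDeriv_nhdsWithin_of_isOpen {𝕜 F : Type*}
    [NontriviallyNormedField 𝕜] [NormedAddCommGroup F] [NormedSpace 𝕜 F] {f g : 𝕜 → F}
    {s : Set 𝕜} {x : 𝕜} (hs : IsOpen s) (h : f =ᶠ[𝓝[s] x] g) (n : ℕ) :
    iteratedDeriv n f =ᶠ[𝓝[s] x] iteratedDeriv n g := by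
  filter_upwards [eventually_eventually_nhdsWithin.2 h, self_mem_nhdsWithin] with y hy hys
  rw [hs.nhdsWithin_eq hys] at hy
  exact Filter.EventuallyEq.iteratedDeriv_eq n hy

section LogDeriv

variable {𝕜 : Type*} [NontriviallyNormedField 𝕜] [CompleteSpace 𝕜]

theorem exists_analyticAt_logDeriv_eq_inv_add {θ : 𝕜 → 𝕜} (hθ : AnalyticAt 𝕜 θ 0)
    (h0 : θ 0 = 0) (h' : deriv θ 0 ≠ 0) :
    ∃ h : 𝕜 → 𝕜, AnalyticAt 𝕜 h 0 ∧ logDeriv θ =ᶠ[𝓝[≠] 0] fun w => w⁻¹ + h w := by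
  obtain ⟨p, hp⟩ := hθ
  set u := dslope θ 0
  have hu : AnalyticAt 𝕜 u 0 := ⟨p.fslope, hp.has_fpower_series_dslope_fslope⟩
  have hu0 : u 0 ≠ 0 := by rwa [show u 0 = deriv θ 0 from dslope_same θ 0]
  have hθu : θ = fun w => w * u w := funext fun w => by
    simpa [h0] using (sub_smul_dslope θ 0 w).symm
  refine ⟨logDeriv u, hu.deriv.div hu hu0, ?_⟩
  filter_upwards [self_mem_nhdsWithin,
    nhdsWithin_le_nhds (hu.eventually_analyticAt.and (hu.continuousAt.eventually_ne hu0))]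
    with w hw ⟨huw, huw0⟩
  rw [hθu, logDeriv_mul (f := fun z => z) w hw huw0 differentiableAt_id huw.differentiableAt,
    logDeriv_id', one_div]

theorem tendsto_zpow_mul_iteratedDeriv_inv_add {h : 𝕜 → 𝕜} (hh : AnalyticAt 𝕜 h 0) (j : ℕ) :
    Tendsto (fun z => z ^ ((j : ℤ) + 1) * iteratedDeriv j (fun w => w⁻¹ + h w) z) (𝓝[≠] 0)
      (𝓝 ((-1) ^ j * j.factorial)) := by
  set G : 𝕜 → 𝕜 := fun z => (-1) ^ j * j.factorial + z ^ (j + 1) * iteratedDeriv j h z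
  have hhj : AnalyticAt 𝕜 (iteratedDeriv j h) 0 := by
    rw [iteratedDeriv_eq_iterate]
    exact hh.iterated_deriv j
  have hG : ContinuousAt G 0 :=
    continuousAt_const.add ((continuous_pow _).continuousAt.mul hhj.continuousAt)
  have hG0 : G 0 = (-1) ^ j * j.factorial := by simp [G]
  refine hG0 ▸ (hG.tendsto.mono_left nhdsWithin_le_nhds).congr' ?_
  filter_upwards [self_mem_nhdsWithin, nhdsWithin_le_nhds hh.eventually_analyticAt]
    with z hz hhz
  rw [iteratedDeriv_fun_add ((analyticAt_inv hz).contDiffAt) hhz.contDiffAt,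
    iteratedDeriv_eq_iterate (f := Inv.inv), iter_deriv_inv, mul_add, ← mul_assoc,
    mul_comm (z ^ _), mul_assoc, ← zpow_add₀ hz, show (j : ℤ) + 1 + (-1 - j) = 0 by ring,
    zpow_zero, mul_one]
  simp only [G, ← zpow_natCast, Nat.cast_add, Nat.cast_one]

theorem tendsto_zpow_mul_iteratedDeriv_logDeriv {θ : 𝕜 → 𝕜} (hθ : AnalyticAt 𝕜 θ 0)
    (h0 : θ 0 = 0) (h' : deriv θ 0 ≠ 0) (j : ℕ) :
    Tendsto (fun z => z ^ ((j : ℤ) + 1) * iteratedDeriv j (logDeriv θ) z) (𝓝[≠] 0)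
      (𝓝 ((-1) ^ j * j.factorial)) := by
  obtain ⟨h, hh, hθh⟩ := exists_analyticAt_logDeriv_eq_inv_add hθ h0 h'
  refine (tendsto_zpow_mul_iteratedDeriv_inv_add hh j).congr' ?_
  filter_upwards [(hθh.iteratedDeriv_nhdsWithin_of_isOpen isOpen_compl_singleton j)] with z hz
  rw [hz]

end LogDeriv

section Decomposition

variable {F : ℕ → LaurentSeries ℂ}

theorem coeff_ne_zero_of_order_eq (hF : ∀ j : ℕ, (F j).order = -((j : ℤ) + 1)) (j : ℕ) :
    (F j).coeff (-((j : ℤ) + 1)) ≠ 0 := by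
  have hj := hF j
  rw [← hj, Ne, HahnSeries.coeff_order_eq_zero]
  rintro h0
  rw [h0, HahnSeries.order_zero] at hj
  omega

theorem coeff_finsupp_sum_smul_of_order_eq (hF : ∀ j : ℕ, (F j).order = -((j : ℤ) + 1))
    (c : ℕ →₀ ℂ) {j : ℕ} (hj : ∀ i ∈ c.support, i ≤ j) :
    (c.sum fun i a => a • F i).coeff (-((j : ℤ) + 1)) =
      c j * (F j).coeff (-((j : ℤ) + 1)) := by
  simp only [Finsupp.sum, HahnSeries.coeff_sum, HahnSeries.coeff_smul, smul_eq_mul]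
  refine Finset.sum_eq_single j (fun i hi hij => ?_)
    (fun hj => by simp [Finsupp.notMem_support_iff.1 hj])
  have hlt : -((j : ℤ) + 1) < (F i).order := by
    rw [hF i]
    have := lt_of_le_of_ne (hj i hi) hij
    omega
  rw [HahnSeries.coeff_eq_zero_of_lt_order hlt, mul_zero]

theorem disjoint_powerSeriesSubspace_span_range (hF : ∀ j : ℕ, (F j).order = -((j : ℤ) + 1)) :
    Disjoint powerSeriesSubspace (Submodule.span ℂ (Set.range F)) := by
  rw [Submodule.disjoint_def]
  rintro G hG hGspan
  obtain ⟨c, rfl⟩ := Finsupp.mem_span_range_iff_exists_finsupp.1 hGspan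
  obtain rfl | hc := eq_or_ne c 0
  · simp
  have hsupp : c.support.Nonempty := Finsupp.support_nonempty_iff.2 hc
  set j := c.support.max' hsupp
  have hcoeff := coeff_finsupp_sum_smul_of_order_eq hF c (j := j) fun i hi =>
    c.support.le_max' i hi
  rw [hG _ (by omega)] at hcoeff
  exact absurd hcoeff.symm (mul_ne_zero (Finsupp.mem_support_iff.1 (c.support.max'_mem hsupp))
    (coeff_ne_zero_of_order_eq hF j))

theorem mem_sup_span_range_of_coeff_eq_zero (hF : ∀ j : ℕ, (F j).order = -((j : ℤ) + 1))
    (k : ℕ) {G : LaurentSeries ℂ} (hG : ∀ n < -(k : ℤ), G.coeff n = 0) :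
    G ∈ powerSeriesSubspace ⊔ Submodule.span ℂ (Set.range F) := by
  induction k generalizing G with
  | zero => exact Submodule.mem_sup_left fun n hn => hG n (by simpa using hn)
  | succ k ih =>
    set a := G.coeff (-((k : ℤ) + 1)) / (F k).coeff (-((k : ℤ) + 1))
    have hsub : G - a • F k ∈ powerSeriesSubspace ⊔ Submodule.span ℂ (Set.range F) := by
      refine ih fun n hn => ?_
      rw [HahnSeries.coeff_sub, HahnSeries.coeff_smul, smul_eq_mul]
      rcases (show n ≤ -((k : ℤ) + 1) by omega).lt_or_eq with hlt | rfl
      · rw [hG n (by push_cast; omega), HahnSeries.coeff_eq_zero_of_lt_order (hF k ▸ hlt),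
          mul_zero, sub_zero]
      · rw [div_mul_cancel₀ _ (coeff_ne_zero_of_order_eq hF k), sub_self]
    simpa using Submodule.add_mem _ hsub
      (Submodule.mem_sup_right (Submodule.smul_mem _ a (Submodule.subset_span ⟨k, rfl⟩)))

theorem isCompl_powerSeriesSubspace_span_range (hF : ∀ j : ℕ, (F j).order = -((j : ℤ) + 1)) :
    IsCompl powerSeriesSubspace (Submodule.span ℂ (Set.range F)) :=
  ⟨disjoint_powerSeriesSubspace_span_range hF, codisjoint_iff_le_sup.2 fun G _ =>
    mem_sup_span_range_of_coeff_eq_zero hF (-G.order).toNat fun _ hn =>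
      HahnSeries.coeff_eq_zero_of_lt_order (by omega)⟩

end Decomposition

theorem laurent_decomposition_L0_general (τ : ℂ) (θ : ℂ → ℂ)
    (hθ_entire : Differentiable ℂ θ)
    (hθ_deriv : deriv θ 0 = 1)
    (hθ_zero : ∀ z : ℂ, θ z = 0 ↔ z ∈ lattice τ)
    (m : ℤ)
    (F : ℕ → LaurentSeries ℂ)
    (hF : ∀ j : ℕ, IsLaurentExpansionAt (F j)
      (fun z => iteratedDeriv j (fun w => deriv θ w / θ w) z *
        Complex.exp (-2 * (Real.pi : ℂ) * Complex.I * (m : ℂ) * z))) :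
    IsCompl powerSeriesSubspace (Submodule.span ℂ (Set.range F)) := by
  have hθ0 : θ 0 = 0 := (hθ_zero 0).2 ⟨0, 0, by simp⟩
  set c : ℂ := -2 * (Real.pi : ℂ) * Complex.I * (m : ℂ)
  have hexp : Tendsto (fun z => Complex.exp (c * z)) (𝓝[≠] 0) (𝓝 1) := by
    simpa using ((continuous_const_mul c).cexp.tendsto 0).mono_left nhdsWithin_le_nhds
  refine isCompl_powerSeriesSubspace_span_range fun j => (hF j).order_eq
    (L := (-1) ^ j * j.factorial * 1) (by simp [Nat.factorial_ne_zero]) ?_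
  have hlog := tendsto_zpow_mul_iteratedDeriv_logDeriv (hθ_entire.analyticAt 0) hθ0
    (by simp [hθ_deriv]) j
  exact (hlog.mul hexp).congr fun z => mul_assoc _ _ _

/-- **`ℂ((z)) = ℂ[[z]] ⊕ span{ℒ((θ′/θ)^{(j)} e^{−2iπmz})}` for `m ∈ ℤ`.**
If `F j` is the Laurent expansion at `0` of `(θ′/θ)^{(j)}(z) e^{−2iπ m z}` for every
`j`, then `ℂ((z))` is the internal direct sum of `ℂ[[z]]` and the span of the `F j`. -/
theorem laurent_decomposition_L0 (τ : ℂ) (hτ : 0 < τ.im) (θ : ℂ → ℂ)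
    (hθ_entire : Differentiable ℂ θ)
    (hθ_deriv : deriv θ 0 = 1)
    (hθ_zero : ∀ z : ℂ, θ z = 0 ↔ z ∈ lattice τ)
    (hθ_per1 : ∀ z : ℂ, θ (z + 1) = - θ z)
    (hθ_perτ : ∀ z : ℂ, θ (z + τ) =
      - Complex.exp (-(Real.pi : ℂ) * Complex.I * τ) *
        Complex.exp (-2 * (Real.pi : ℂ) * Complex.I * z) * θ z)
    (m : ℤ)
    (F : ℕ → LaurentSeries ℂ)
    (hF : ∀ j : ℕ, IsLaurentExpansionAt (F j)
      (fun z => iteratedDeriv j (fun w => deriv θ w / θ w) z *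
        Complex.exp (-2 * (Real.pi : ℂ) * Complex.I * (m : ℂ) * z))) :
    IsCompl powerSeriesSubspace (Submodule.span ℂ (Set.range F)) :=
  laurent_decomposition_L0_general τ θ hθ_entire hθ_deriv hθ_zero m F hF
end

section
/- For all i, j ∈ ℕ, res₀( (θ′/θ)^{(i)}(z) · (θ′/θ)^{(j)}(z) ) = 0, where (θ′/θ)^{(i)} denotes the i-th derivative of the logarithmic derivative θ′/θ. (This expresses the isotropy of the subspace 𝔥 ⊗ L₀ for the residue pairing.) -/
open Complex Metric

lemma lattice_norm_lb {τ : ℂ} (hτ : 0 < τ.im) {z : ℂ} (hz : z ∈ lattice τ) (h0 : z ≠ 0) :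
    min 1 τ.im ≤ ‖z‖ := by
  obtain ⟨m, n, rfl⟩ := hz
  rcases eq_or_ne n 0 with rfl | hn
  · simp only [Int.cast_zero, zero_mul, add_zero] at h0 ⊢
    have hm : m ≠ 0 := by exact_mod_cast h0
    calc min 1 τ.im ≤ 1 := min_le_left _ _
    _ ≤ |(m : ℝ)| := by exact_mod_cast Int.one_le_abs hm
    _ = ‖(m : ℂ)‖ := by
        rw [← Complex.ofReal_intCast, Complex.norm_real, Real.norm_eq_abs]
  · have him : ((m : ℂ) + n * τ).im = n * τ.im := by simp
    calc min 1 τ.im ≤ τ.im := min_le_right _ _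
    _ ≤ |(n : ℝ)| * τ.im := by
        have h1 : (1 : ℝ) ≤ |(n : ℝ)| := by exact_mod_cast Int.one_le_abs hn
        nlinarith
    _ = |((m : ℂ) + n * τ).im| := by rw [him, abs_mul, abs_of_pos hτ]
    _ ≤ ‖(m : ℂ) + n * τ‖ := Complex.abs_im_le_norm _

lemma circleIntegral_eq_of_expansion (F : LaurentSeries ℂ) (f : ℂ → ℂ) {r : ℝ} (hr : 0 < r)
    (hsum : ∀ z : ℂ, z ≠ 0 → ‖z‖ = r → HasSum (fun n : ℤ => F.coeff n * z ^ n) (f z)) :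
    (∮ z in C(0, r), f z) = 2 * Real.pi * I * F.coeff (-1) := by
  have hz0 : ∀ θ : ℝ, circleMap 0 r θ ≠ 0 := fun θ => circleMap_ne_center hr.ne'
  have hznorm : ∀ θ : ℝ, ‖circleMap 0 r θ‖ = r := by
    intro θ; rw [norm_circleMap_zero, abs_of_pos hr]
  -- continuous family
  have hcont : ∀ n : ℤ, Continuous fun θ : ℝ =>
      deriv (circleMap 0 r) θ * (F.coeff n * circleMap 0 r θ ^ n) := by
    intro n
    simp only [deriv_circleMap]
    exact ((continuous_circleMap 0 r).mul continuous_const).mul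
      (continuous_const.mul ((continuous_circleMap 0 r).zpow₀ n fun θ => Or.inl (hz0 θ)))
  set φ : ℤ → C(ℝ, ℂ) := fun n => ⟨_, hcont n⟩ with hφ
  have hsummable : Summable fun n : ℤ => ‖F.coeff n‖ * r ^ n := by
    have h := (hsum (r : ℂ) (by exact_mod_cast hr.ne') (by simp [abs_of_pos hr])).summable
    have := (summable_norm_iff.mpr h)
    simpa [norm_mul, norm_zpow, Complex.norm_real, abs_of_pos hr] using this
  have hbound : ∀ n : ℤ, ∀ θ : ℝ, ‖φ n θ‖ = r * (‖F.coeff n‖ * r ^ n) := by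
    intro n θ
    simp only [hφ, ContinuousMap.coe_mk, deriv_circleMap, norm_mul,
      Complex.norm_I]
    rw [hznorm,
      norm_zpow, hznorm]
    ring
  have hsumnorm : Summable fun n : ℤ =>
      ‖(φ n).restrict (⟨Set.uIcc 0 (2 * Real.pi), isCompact_uIcc⟩ : TopologicalSpace.Compacts ℝ)‖ := by
    refine Summable.of_nonneg_of_le (fun n => norm_nonneg _) (fun n => ?_) (hsummable.mul_left r)
    refine ContinuousMap.norm_le _ (by positivity) |>.mpr fun x => ?_
    rw [ContinuousMap.restrict_apply]
    exact le_of_eq (hbound n x)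
  have key := intervalIntegral.tsum_intervalIntegral_eq_of_summable_norm
    (a := 0) (b := 2 * Real.pi) hsumnorm
  -- RHS of key is the circle integral of f
  have hRHS : (∫ x in (0:ℝ)..(2 * Real.pi), ∑' n : ℤ, φ n x) = ∮ z in C(0, r), f z := by
    rw [circleIntegral]
    refine intervalIntegral.integral_congr fun x _ => ?_
    have hs := (hsum (circleMap 0 r x) (hz0 x) (hznorm x)).mul_left (deriv (circleMap 0 r) x)
    simpa [hφ, mul_assoc, smul_eq_mul] using hs.tsum_eq
  -- LHS: each integral is a circle integral of a power
  have hLHS : ∀ n : ℤ, (∫ x in (0:ℝ)..(2 * Real.pi), φ n x)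
      = F.coeff n * ∮ z in C(0, r), z ^ n := by
    intro n
    rw [circleIntegral, ← intervalIntegral.integral_const_mul]
    refine intervalIntegral.integral_congr fun x _ => ?_
    simp [hφ, smul_eq_mul]; ring
  have hpow : ∀ n : ℤ, (∮ z in C(0, r), z ^ n)
      = if n = -1 then 2 * Real.pi * I else 0 := by
    intro n
    rcases eq_or_ne n (-1) with rfl | hn
    · have := circleIntegral.integral_sub_inv_of_mem_ball (c := (0:ℂ)) (w := 0) (R := r)
        (mem_ball_self hr)
      simpa using this
    · have := circleIntegral.integral_sub_zpow_of_ne hn (0 : ℂ) 0 r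
      simp only [sub_zero] at this
      simp [this, hn]
  rw [← hRHS, ← key]
  rw [tsum_eq_single (-1 : ℤ) (by
    intro n hn
    rw [hLHS n, hpow n, if_neg hn, mul_zero])]
  rw [hLHS, hpow, if_pos rfl]
  ring

lemma circleIntegral_even_eq_zero {f : ℂ → ℂ} {r : ℝ} (hf : ∀ z, f (-z) = f z) :
    (∮ z in C(0, r), f z) = 0 := by
  have hmap : ∀ θ : ℝ, circleMap 0 r (θ + Real.pi) = -circleMap 0 r θ := by
    intro θ
    simp only [circleMap, zero_add]
    push_cast
    rw [add_mul, Complex.exp_add, Complex.exp_pi_mul_I]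
    ring
  set g : ℝ → ℂ := fun θ => deriv (circleMap 0 r) θ • f (circleMap 0 r θ) with hg
  have hper : Function.Periodic g (2 * Real.pi) := by
    intro θ
    simp only [hg, deriv_circleMap, (periodic_circleMap 0 r) θ]
  have hneg : ∀ θ : ℝ, g (θ + Real.pi) = -g θ := by
    intro θ
    simp only [hg, deriv_circleMap, hmap θ, hf, smul_eq_mul]
    ring
  have h1 : (∫ θ in (0:ℝ)..(2 * Real.pi), g (θ + Real.pi)) = ∫ θ in (0:ℝ)..(2 * Real.pi), g θ := by
    rw [intervalIntegral.integral_comp_add_right]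
    have := hper.intervalIntegral_add_eq Real.pi 0
    rw [zero_add] at this
    rw [show (0:ℝ) + Real.pi = Real.pi by ring, show 2 * Real.pi + Real.pi = Real.pi + 2 * Real.pi by ring]
    exact this
  have h2 : (∫ θ in (0:ℝ)..(2 * Real.pi), g (θ + Real.pi))
      = -∫ θ in (0:ℝ)..(2 * Real.pi), g θ := by
    rw [← intervalIntegral.integral_neg]
    exact intervalIntegral.integral_congr fun x _ => hneg x
  have : (∫ θ in (0:ℝ)..(2 * Real.pi), g θ) = 0 := by
    have := h1.symm.trans h2
    linear_combination this / 2
  simpa [circleIntegral, hg] using this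

lemma theta_odd (τ : ℂ) (hτ : 0 < τ.im) (θ : ℂ → ℂ)
    (hθ_entire : Differentiable ℂ θ)
    (hθ_deriv : deriv θ 0 = 1)
    (hθ_zero : ∀ z : ℂ, θ z = 0 ↔ z ∈ lattice τ)
    (hθ_per1 : ∀ z : ℂ, θ (z + 1) = - θ z)
    (hθ_perτ : ∀ z : ℂ, θ (z + τ) =
      - Complex.exp (-(Real.pi : ℂ) * Complex.I * τ) *
        Complex.exp (-2 * (Real.pi : ℂ) * Complex.I * z) * θ z) :
    ∀ z : ℂ, θ (-z) = - θ z := by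
  set c : ℂ → ℂ := fun z => - Complex.exp (-(Real.pi : ℂ) * Complex.I * τ) *
        Complex.exp (-2 * (Real.pi : ℂ) * Complex.I * z) with hc
  have hθτ : ∀ z : ℂ, θ (z + τ) = c z * θ z := hθ_perτ
  have hc_ne : ∀ z : ℂ, c z ≠ 0 := by
    intro z
    simp only [hc, neg_mul, neg_ne_zero]
    exact mul_ne_zero (Complex.exp_ne_zero _) (Complex.exp_ne_zero _)
  have hcc : ∀ z : ℂ, c z * c (-z - τ) = 1 := by
    intro z
    simp only [hc]
    rw [show (- Complex.exp (-(Real.pi : ℂ) * Complex.I * τ) *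
        Complex.exp (-2 * (Real.pi : ℂ) * Complex.I * z)) *
        (- Complex.exp (-(Real.pi : ℂ) * Complex.I * τ) *
        Complex.exp (-2 * (Real.pi : ℂ) * Complex.I * (-z - τ))) =
        Complex.exp (-(Real.pi : ℂ) * Complex.I * τ + -2 * (Real.pi : ℂ) * Complex.I * z +
          (-(Real.pi : ℂ) * Complex.I * τ + -2 * (Real.pi : ℂ) * Complex.I * (-z - τ))) by
        rw [Complex.exp_add, Complex.exp_add, Complex.exp_add]; ring]
    rw [show -(Real.pi : ℂ) * Complex.I * τ + -2 * (Real.pi : ℂ) * Complex.I * z +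
          (-(Real.pi : ℂ) * Complex.I * τ + -2 * (Real.pi : ℂ) * Complex.I * (-z - τ)) = 0 by ring]
    exact Complex.exp_zero
  have hθτ' : ∀ z : ℂ, θ (-z - τ) = c z * θ (-z) := by
    intro z
    have h := hθτ (-z - τ)
    rw [sub_add_cancel] at h
    calc θ (-z - τ) = (c z * c (-z - τ)) * θ (-z - τ) := by rw [hcc z, one_mul]
    _ = c z * θ (-z) := by rw [mul_assoc, ← h]
  have hθ1' : ∀ z : ℂ, θ (-z - 1) = - θ (-z) := by
    intro z
    have h := hθ_per1 (-z - 1)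
    rw [sub_add_cancel] at h
    linear_combination h
  set d : ℂ → ℂ := fun z => θ z + θ (-z) with hd
  have hd1 : ∀ z : ℂ, d (z + 1) = - d z := by
    intro z
    simp only [hd]
    rw [hθ_per1, show -(z + 1) = -z - 1 by ring, hθ1']
    ring
  have hdτ : ∀ z : ℂ, d (z + τ) = c z * d z := by
    intro z
    simp only [hd]
    rw [hθτ, show -(z + τ) = -z - τ by ring, hθτ']
    ring
  set e : ℂ → ℂ := fun z => d z / θ z with he
  have hp1 : Function.Periodic e 1 := by
    intro z
    simp only [he, hd1, hθ_per1, neg_div_neg_eq]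
  have hpτ : Function.Periodic e τ := by
    intro z
    simp only [he, hdτ, hθτ]
    rw [mul_div_mul_left _ _ (hc_ne z)]
  have θ0 : θ 0 = 0 := (hθ_zero 0).mpr ⟨0, 0, by simp⟩
  have hd0 : d 0 = 0 := by simp [hd, θ0]
  have he0 : e 0 = 0 := by simp [he, hd0]
  have h1 : HasDerivAt θ 1 0 := by
    have := (hθ_entire 0).hasDerivAt
    rwa [hθ_deriv] at this
  have h2 : HasDerivAt (fun z : ℂ => θ (-z)) (-1) 0 := by
    have hneg : HasDerivAt (fun z : ℂ => -z) (-1) 0 := hasDerivAt_neg 0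
    have h1' : HasDerivAt θ 1 (-0 : ℂ) := by rwa [neg_zero]
    simpa [Function.comp_def] using h1'.comp 0 hneg
  have hdd : HasDerivAt d 0 0 := by
    have := h1.add h2
    simpa [hd, Pi.add_def] using this
  -- continuity of e at 0 with value 0
  have hslope_d : Filter.Tendsto (slope d 0) (nhdsWithin 0 {(0:ℂ)}ᶜ) (nhds 0) :=
    hasDerivAt_iff_tendsto_slope.mp hdd
  have hslope_θ : Filter.Tendsto (slope θ 0) (nhdsWithin 0 {(0:ℂ)}ᶜ) (nhds 1) :=
    hasDerivAt_iff_tendsto_slope.mp h1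
  have hdiv : Filter.Tendsto (fun z => slope d 0 z / slope θ 0 z)
      (nhdsWithin 0 {(0:ℂ)}ᶜ) (nhds (0 / 1)) := hslope_d.div hslope_θ one_ne_zero
  have heqslope : ∀ z ∈ ({(0:ℂ)}ᶜ : Set ℂ), slope d 0 z / slope θ 0 z = e z := by
    intro z hz
    have hz0 : z ≠ 0 := hz
    rw [slope_def_field, slope_def_field, hd0, θ0, sub_zero, sub_zero, sub_zero]
    rcases eq_or_ne (θ z) 0 with h | h
    · simp [he, h]
    · field_simp [he]
      simp only [he]; field_simp
  have hcont0 : Filter.Tendsto e (nhdsWithin 0 {(0:ℂ)}ᶜ) (nhds 0) := by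
    have := hdiv.congr' (by filter_upwards [self_mem_nhdsWithin] using heqslope)
    simpa using this
  have hce : ContinuousAt e 0 := by
    rw [← continuousWithinAt_compl_self]
    rw [ContinuousWithinAt, he0]
    exact hcont0
  have hdiff : ∀ z : ℂ, θ z ≠ 0 → DifferentiableAt ℂ e z := by
    intro z hz
    have hdθ : DifferentiableAt ℂ (fun w : ℂ => θ (-w)) z :=
      DifferentiableAt.comp z (hθ_entire (-z)) differentiable_neg.differentiableAt
    exact ((hθ_entire z).add hdθ).div (hθ_entire z) hz
  have hnear : ∀ᶠ z in nhdsWithin 0 {(0:ℂ)}ᶜ, DifferentiableAt ℂ e z := by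
    have hball : ball (0:ℂ) (min 1 τ.im) ∈ nhds (0:ℂ) := ball_mem_nhds _ (lt_min one_pos hτ)
    filter_upwards [self_mem_nhdsWithin, nhdsWithin_le_nhds hball] with z hz hb
    refine hdiff z fun h0 => ?_
    have hl := (hθ_zero z).mp h0
    have hlb := lattice_norm_lb hτ hl hz
    rw [mem_ball, dist_zero_right] at hb
    linarith
  have hD0 : DifferentiableAt ℂ e 0 :=
    (Complex.analyticAt_of_differentiable_on_punctured_nhds_of_continuousAt hnear hce).differentiableAt
  have hper : ∀ (m n : ℤ) (w : ℂ), e (w + ((m : ℂ) + n * τ)) = e w := by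
    intro m n w
    have h1' := (hp1.int_mul m) (w + (n : ℂ) * τ)
    have h2' := (hpτ.int_mul n) w
    rw [show w + ((m : ℂ) + n * τ) = w + (n : ℂ) * τ + (m : ℂ) * 1 by ring]
    rw [h1', h2']
  have hdall : Differentiable ℂ e := by
    intro z
    rcases eq_or_ne (θ z) 0 with h0 | h0
    · obtain ⟨m, n, rfl⟩ := (hθ_zero z).mp h0
      have hfun : e = fun w => e (w - ((m : ℂ) + n * τ)) := by
        funext w
        rw [← hper m n (w - ((m : ℂ) + n * τ)), sub_add_cancel]
      rw [hfun]
      have hsub : DifferentiableAt ℂ (fun w : ℂ => w - ((m : ℂ) + n * τ)) ((m : ℂ) + n * τ) :=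
        (differentiable_id.sub_const _).differentiableAt
      have := DifferentiableAt.comp (g := e) (f := fun w : ℂ => w - ((m : ℂ) + n * τ))
        ((m : ℂ) + n * τ) (by simpa using hD0) hsub
      simpa [Function.comp_def] using this
    · exact hdiff z h0
  have hcontE : Continuous e := hdall.continuous
  set K : Set ℂ := (fun p : ℝ × ℝ => (p.1 : ℂ) + (p.2 : ℂ) * τ) '' (Set.Icc 0 1 ×ˢ Set.Icc 0 1)
    with hK
  have hKc : IsCompact K := (isCompact_Icc.prod isCompact_Icc).image (by fun_prop)
  obtain ⟨C, hC⟩ := hKc.exists_bound_of_continuousOn hcontE.continuousOn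
  have hbound : ∀ z : ℂ, ‖e z‖ ≤ C := by
    intro z
    set y : ℝ := z.im / τ.im with hy
    set x : ℝ := z.re - y * τ.re with hx
    have hzeq : z = (x : ℂ) + (y : ℂ) * τ := by
      apply Complex.ext
      · simp [hx]
      · simp [hy, div_mul_cancel₀ _ hτ.ne']
    have hw : ((Int.fract x : ℝ) : ℂ) + ((Int.fract y : ℝ) : ℂ) * τ ∈ K :=
      ⟨(Int.fract x, Int.fract y),
        ⟨⟨Int.fract_nonneg x, (Int.fract_lt_one x).le⟩,
         ⟨Int.fract_nonneg y, (Int.fract_lt_one y).le⟩⟩, rfl⟩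
    have hzw : e z = e (((Int.fract x : ℝ) : ℂ) + ((Int.fract y : ℝ) : ℂ) * τ) := by
      conv_lhs => rw [hzeq]
      rw [← hper ⌊x⌋ ⌊y⌋ (((Int.fract x : ℝ) : ℂ) + ((Int.fract y : ℝ) : ℂ) * τ)]
      congr 1
      rw [Int.fract, Int.fract]
      push_cast
      ring
    rw [hzw]
    exact hC _ hw
  have hbdd : Bornology.IsBounded (Set.range e) := by
    rw [isBounded_iff_forall_norm_le]
    exact ⟨C, by rintro _ ⟨z, rfl⟩; exact hbound z⟩
  have hzero : ∀ z : ℂ, e z = 0 := by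
    intro z
    rw [hdall.apply_eq_apply_of_bounded hbdd z 0, he0]
  intro z
  rcases eq_or_ne (θ z) 0 with h0 | h0
  · obtain ⟨m, n, rfl⟩ := (hθ_zero z).mp h0
    have hneg : -((m : ℂ) + n * τ) ∈ lattice τ := ⟨-m, -n, by push_cast; ring⟩
    rw [(hθ_zero _).mpr hneg, h0, neg_zero]
  · have hez := hzero z
    rcases div_eq_zero_iff.mp hez with hdz | hθz
    · have h' : θ z + θ (-z) = 0 := hdz
      linear_combination h'
    · exact absurd hθz h0

lemma exists_prim (G : ℕ → ℂ → ℂ) (U : Set ℂ)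
    (hd : ∀ n, ∀ z ∈ U, HasDerivAt (G n) (G (n + 1) z) z) :
    ∀ k i : ℕ, ∃ H : ℂ → ℂ, ∀ z ∈ U, HasDerivAt H (G i z * G (i + (2 * k + 1)) z) z := by
  intro k
  induction k with
  | zero =>
    intro i
    refine ⟨fun z => G i z * G i z / 2, fun z hz => ?_⟩
    have h := ((hd i z hz).fun_mul (hd i z hz)).div_const 2
    refine h.congr_deriv ?_
    norm_num
    ring
  | succ k ih =>
    intro i
    obtain ⟨H', hH'⟩ := ih (i + 1)
    refine ⟨fun z => G i z * G (i + (2 * k + 2)) z - H' z, fun z hz => ?_⟩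
    have h1 := (hd i z hz).fun_mul (hd (i + (2 * k + 2)) z hz)
    have h2 := hH' z hz
    have e1 : i + 1 + (2 * k + 1) = i + (2 * k + 2) := by omega
    rw [e1] at h2
    have h3 := h1.fun_sub h2
    have e2 : i + (2 * k + 2) + 1 = i + (2 * (k + 1) + 1) := by omega
    rw [e2] at h3
    refine h3.congr_deriv ?_
    ring

lemma exists_prim' (G : ℕ → ℂ → ℂ) (U : Set ℂ)
    (hd : ∀ n, ∀ z ∈ U, HasDerivAt (G n) (G (n + 1) z) z)
    {i j : ℕ} (hij : Odd (i + j)) :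
    ∃ H : ℂ → ℂ, ∀ z ∈ U, HasDerivAt H (G i z * G j z) z := by
  obtain ⟨m, hm⟩ := hij
  rcases le_total i j with h | h
  · obtain ⟨k, hk⟩ : ∃ k, j = i + (2 * k + 1) := ⟨(j - i - 1) / 2, by omega⟩
    subst hk
    exact exists_prim G U hd k i
  · obtain ⟨k, hk⟩ : ∃ k, i = j + (2 * k + 1) := ⟨(i - j - 1) / 2, by omega⟩
    subst hk
    obtain ⟨H, hH⟩ := exists_prim G U hd k j
    exact ⟨H, fun z hz => by rw [mul_comm]; exact hH z hz⟩

/-- **Isotropy of `𝔥 ⊗ L₀` for the residue pairing.**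
For all `i, j ∈ ℕ`, `res₀( (θ′/θ)^{(i)}(z) · (θ′/θ)^{(j)}(z) ) = 0`. -/
theorem residue_logDeriv_mul_logDeriv (τ : ℂ) (hτ : 0 < τ.im) (θ : ℂ → ℂ)
    (hθ_entire : Differentiable ℂ θ)
    (hθ_deriv : deriv θ 0 = 1)
    (hθ_zero : ∀ z : ℂ, θ z = 0 ↔ z ∈ lattice τ)
    (hθ_per1 : ∀ z : ℂ, θ (z + 1) = - θ z)
    (hθ_perτ : ∀ z : ℂ, θ (z + τ) =
      - Complex.exp (-(Real.pi : ℂ) * Complex.I * τ) *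
        Complex.exp (-2 * (Real.pi : ℂ) * Complex.I * z) * θ z)
    (i j : ℕ) :
    ∀ F : LaurentSeries ℂ,
      IsLaurentExpansionAt F
        (fun z => iteratedDeriv i (fun w => deriv θ w / θ w) z *
          iteratedDeriv j (fun w => deriv θ w / θ w) z) →
      F.coeff (-1) = 0 := by
  intro F hF
  obtain ⟨ρ, hρ, hsum⟩ := hF
  set g : ℂ → ℂ := fun w => deriv θ w / θ w with hg
  set G : ℕ → ℂ → ℂ := fun n => iteratedDeriv n g with hG
  -- θ is odd, hence g is odd
  have hodd := theta_odd τ hτ θ hθ_entire hθ_deriv hθ_zero hθ_per1 hθ_perτ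
  have hderiv_even : ∀ z : ℂ, deriv θ (-z) = deriv θ z := by
    intro z
    have h1 : deriv (fun x : ℂ => θ (-x)) z = -deriv θ (-z) := deriv_comp_neg θ z
    have h2 : (fun x : ℂ => θ (-x)) = fun x : ℂ => -θ x := funext hodd
    rw [h2] at h1
    rw [deriv.fun_neg] at h1
    linear_combination h1
  have hgodd : ∀ z : ℂ, g (-z) = -g z := by
    intro z
    simp only [hg, hderiv_even, hodd, div_neg]
  -- parity of iterated derivatives
  have hGpar : ∀ (n : ℕ) (z : ℂ), G n (-z) = (-1 : ℂ) ^ (n + 1) * G n z := by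
    intro n z
    have h := iteratedDeriv_comp_neg n g z
    have h2 : (fun x : ℂ => g (-x)) = fun x : ℂ => -g x := funext hgodd
    rw [h2, iteratedDeriv_fun_neg] at h
    have hsq : ((-1 : ℂ)) ^ n * (-1 : ℂ) ^ n = 1 := by
      rw [← pow_add]
      exact Even.neg_one_pow ⟨n, by ring⟩
    have : G n (-z) = (-1 : ℂ) ^ n * ((-1 : ℂ) ^ n • iteratedDeriv n g (-z)) := by
      rw [smul_eq_mul, ← mul_assoc, hsq, one_mul]
    rw [this, ← h]
    simp only [hG, smul_eq_mul]
    ring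
  -- differentiability off the lattice
  set U : Set ℂ := {z : ℂ | θ z ≠ 0} with hU
  have hθa : AnalyticOnNhd ℂ θ Set.univ := by
    rw [← analyticOnNhd_univ_iff_differentiable] at hθ_entire
    exact hθ_entire
  have hGanal : ∀ n : ℕ, AnalyticOnNhd ℂ (G n) U := by
    intro n
    induction n with
    | zero =>
      intro z hz
      have : AnalyticAt ℂ g z := ((hθa.deriv) z trivial).div (hθa z trivial) hz
      simpa [hG, iteratedDeriv_zero] using this
    | succ n ih =>
      have : G (n + 1) = deriv (G n) := iteratedDeriv_succ
      rw [this]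
      exact ih.deriv
  have hGd : ∀ n : ℕ, ∀ z ∈ U, HasDerivAt (G n) (G (n + 1) z) z := by
    intro n z hz
    have h1 := ((hGanal n) z hz).differentiableAt.hasDerivAt
    have : G (n + 1) z = deriv (G n) z := by rw [show G (n + 1) = deriv (G n) from iteratedDeriv_succ]
    rwa [this]
  -- the radius
  set r : ℝ := min (ρ / 2) (min 1 τ.im / 2) with hr
  have hr0 : 0 < r := lt_min (by linarith) (by positivity)
  have hrρ : r < ρ := lt_of_le_of_lt (min_le_left _ _) (by linarith)
  have hsphereU : ∀ z ∈ sphere (0 : ℂ) r, θ z ≠ 0 := by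
    intro z hzs
    have hzn : ‖z‖ = r := by rwa [mem_sphere_iff_norm, sub_zero] at hzs
    intro h0
    have hl := (hθ_zero z).mp h0
    have hz0 : z ≠ 0 := by
      intro h; rw [h, norm_zero] at hzn; exact hr0.ne hzn
    have hlb := lattice_norm_lb hτ hl hz0
    have : r ≤ min 1 τ.im / 2 := min_le_right _ _
    have hmin : 0 < min 1 τ.im := lt_min one_pos hτ
    rw [hzn] at hlb
    linarith
  -- residue formula
  set f : ℂ → ℂ := fun z => G i z * G j z with hf
  have hres : (∮ z in C(0, r), f z) = 2 * Real.pi * I * F.coeff (-1) := by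
    refine circleIntegral_eq_of_expansion F f hr0 fun z hz0 hzr => ?_
    exact hsum z hz0 (by rw [hzr]; exact hrρ)
  have hzero : (∮ z in C(0, r), f z) = 0 := by
    rcases Nat.even_or_odd (i + j) with hpar | hpar
    · refine circleIntegral_even_eq_zero fun z => ?_
      simp only [hf]
      rw [hGpar i z, hGpar j z]
      have hpow : ((-1 : ℂ)) ^ (i + 1) * (-1 : ℂ) ^ (j + 1) = 1 := by
        rw [← pow_add]
        refine Even.neg_one_pow ?_
        have : i + 1 + (j + 1) = i + j + 2 := by ring
        rw [this]
        exact hpar.add even_two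
      calc (-1 : ℂ) ^ (i + 1) * G i z * ((-1 : ℂ) ^ (j + 1) * G j z)
          = ((-1 : ℂ) ^ (i + 1) * (-1 : ℂ) ^ (j + 1)) * (G i z * G j z) := by ring
      _ = G i z * G j z := by rw [hpow, one_mul]
    · obtain ⟨H, hH⟩ := exists_prim' G U hGd hpar
      refine circleIntegral.integral_eq_zero_of_hasDerivWithinAt (f := H) hr0.le fun z hz => ?_
      exact (hH z (hsphereU z hz)).hasDerivWithinAt
  rw [hzero] at hres
  have h2pi : (2 * (Real.pi : ℂ) * I) ≠ 0 := by
    simp [Real.pi_ne_zero, I_ne_zero]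
  rcases mul_eq_zero.mp hres.symm with h | h
  · exact absurd h h2pi
  · exact h
end
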